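/- arXiv:math/9911214 — 4 statements merged into one kernel-verified Lean document; each statement's English description precedes it below -/
import Mathlib

section
/- If s ∈ S^ℕ is an infinite reduced word of (W, S), then Φ̃^∞(s) is an infinite real biconvex set. -/
open scoped Pointwise

section

variable {W V : Type*} [Group W] [AddCommGroup V] [Module ℝ V]

/-- A vector is a nonnegative (finitely supported) linear combination of the family `α`. -/
def PosComb {ι : Type*} (α : ι → V) (v : V) : Prop :=
  ∃ c : ι →₀ ℝ, (∀ i, 0 ≤ c i) ∧ v = c.sum fun i r => r • α i

/-- The set of positive roots: elements of `Δ` that are nonnegative combinations of `Π`. -/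
def PosRoots {W : Type*} {S : Set W} (α : S → V) (Δ : Set V) : Set V :=
  {v ∈ Δ | PosComb α v}

/-- The set of negative roots. -/
def NegRoots {W : Type*} {S : Set W} (α : S → V) (Δ : Set V) : Set V :=
  {v ∈ Δ | PosComb α (-v)}

/-- The conditions R(i)--R(iv) expressing that `(V, Δ, Π)` is a root system of the pair `(W, S)`,
where `S` is a set of involutive generators of `W`, `ρ` is a representation of `W` on `V`,
`Δ ⊆ V ∖ {0}` is `W`-invariant and symmetric, and `Π = {α_s | s ∈ S} ⊆ Δ`. -/
structure RootSystemData (ρ : Representation ℝ W V) (S : Set W) (α : S → V) (Δ : Set V) :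
    Prop where
  invol : ∀ s ∈ S, s ≠ 1 ∧ s * s = 1
  gen : Subgroup.closure S = ⊤
  zero_not_mem : (0 : V) ∉ Δ
  symm : ∀ v ∈ Δ, -v ∈ Δ
  winv : ∀ w : W, ∀ v ∈ Δ, ρ w v ∈ Δ
  pi_mem : ∀ s : S, α s ∈ Δ
  pos_or_neg : ∀ v ∈ Δ, Xor' (PosComb α v) (PosComb α (-v))
  refl_neg : ∀ s : S, ρ (s : W) (α s) = -α s
  refl_perm : ∀ s : S, ⇑(ρ (s : W)) '' (PosRoots α Δ \ {α s}) = PosRoots α Δ \ {α s}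
  conj : ∀ (w : W) (s t : S), ρ w (α t) = α s → w * (t : W) * w⁻¹ = (s : W)

/-- `Φ(y) = {β ∈ Δ₊ | y⁻¹(β) < 0}`. -/
def PhiSet (ρ : Representation ℝ W V) {S : Set W} (α : S → V) (Δ : Set V) (y : W) : Set V :=
  {β ∈ PosRoots α Δ | ρ y⁻¹ β ∈ NegRoots α Δ}

/-- The length of `w` with respect to the generating set `S`. -/
noncomputable def len {W : Type*} [Group W] (S : Set W) (w : W) : ℕ :=
  sInf {n | ∃ l : List W, (∀ x ∈ l, x ∈ S) ∧ l.length = n ∧ l.prod = w}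

/-- The partial products `z_s(p) = s(1) ⋯ s(p)` of an infinite sequence in `S`
(indexed so that `zword f p` is the product of the first `p` letters, with `zword f 0 = 1`). -/
def zword {W : Type*} [Group W] {S : Set W} (f : ℕ → S) (p : ℕ) : W :=
  ((List.range p).map fun k => (f k : W)).prod

/-- An infinite sequence in `S` is an infinite reduced word of `(W, S)` if
`ℓ(z_s(p)) = p` for all `p`. -/
def InfRed {W : Type*} [Group W] (S : Set W) (f : ℕ → S) : Prop :=
  ∀ p : ℕ, len S (zword f p) = p

/-- The relation `∼` on infinite reduced words. -/
def wrel {W : Type*} [Group W] (S : Set W) (f g : ℕ → S) : Prop :=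
  ∀ p q : ℕ, ∃ p₀ ≥ p, ∃ q₀ ≥ q,
    len S ((zword f p)⁻¹ * zword g p₀) = p₀ - p ∧
    len S ((zword g q)⁻¹ * zword f q₀) = q₀ - q

/-- `Φ̃^∞(s) = ⋃_{p ∈ ℕ} Φ(z_s(p))`. -/
def PhiInf (ρ : Representation ℝ W V) {S : Set W} (α : S → V) (Δ : Set V) (f : ℕ → S) : Set V :=
  ⋃ p : ℕ, PhiSet ρ α Δ (zword f p)

/-- The set of real roots `Δ^re = {w(α_s) | w ∈ W, s ∈ S}`. -/
def RealRoots (ρ : Representation ℝ W V) {S : Set W} (α : S → V) : Set V :=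
  {v | ∃ (w : W) (t : S), v = ρ w (α t)}

/-- `B` is a convex set in `A`: `B ⊆ A` and `β, γ ∈ B`, `β + γ ∈ A` imply `β + γ ∈ B`. -/
def ConvexIn (A B : Set V) : Prop :=
  B ⊆ A ∧ ∀ x ∈ B, ∀ y ∈ B, x + y ∈ A → x + y ∈ B


namespace StatementAux
set_option linter.unusedSectionVars false

variable {W V : Type*} [Group W] [AddCommGroup V] [Module ℝ V]
variable {ρ : Representation ℝ W V} {S : Set W} {α : S → V} {Δ : Set V}

lemma posComb_add {v w : V} (hv : PosComb α v) (hw : PosComb α w) :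
    PosComb α (v + w) := by
  obtain ⟨c, hc, hcv⟩ := hv
  obtain ⟨d, hd, hdw⟩ := hw
  refine ⟨c + d, fun i => add_nonneg (hc i) (hd i), ?_⟩
  rw [Finsupp.sum_add_index' (fun i => zero_smul ℝ (α i))
    (fun i r r' => add_smul r r' (α i)), hcv, hdw]

lemma len_le {w : W} {l : List W} (hl : ∀ x ∈ l, x ∈ S) (hp : l.prod = w) :
    len S w ≤ l.length :=
  Nat.sInf_le ⟨l, hl, rfl, hp⟩

lemma zword_succ (f : ℕ → S) (p : ℕ) :
    zword f (p + 1) = zword f p * (f p : W) := by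
  unfold zword
  rw [List.range_succ, List.map_append, List.prod_append]
  simp

lemma zword_shift (f : ℕ → S) (p q : ℕ) :
    zword f (p + q) = zword f p * ((List.range q).map fun i => (f (p + i) : W)).prod := by
  induction q with
  | zero => simp
  | succ q ih =>
    rw [← add_assoc, zword_succ, ih, List.range_succ, List.map_append, List.prod_append,
      mul_assoc]
    simp

lemma rho_cancel (w : W) (v : V) : ρ w (ρ w⁻¹ v) = v := by
  rw [← Module.End.mul_apply, ← map_mul, mul_inv_cancel, map_one, Module.End.one_apply]

lemma rho_cancel' (w : W) (v : V) : ρ w⁻¹ (ρ w v) = v := by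
  rw [← Module.End.mul_apply, ← map_mul, inv_mul_cancel, map_one, Module.End.one_apply]

variable (h : RootSystemData ρ S α Δ)
include h

lemma not_both {v : V} (hp : v ∈ PosRoots α Δ) (hn : v ∈ NegRoots α Δ) : False := by
  rcases h.pos_or_neg v hp.1 with ⟨_, hb⟩ | ⟨_, hb⟩
  · exact hb hn.2
  · exact hb hp.2

lemma pos_or_neg' {v : V} (hv : v ∈ Δ) : v ∈ PosRoots α Δ ∨ v ∈ NegRoots α Δ := by
  rcases h.pos_or_neg v hv with ⟨hp, _⟩ | ⟨hn, _⟩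
  · exact Or.inl ⟨hv, hp⟩
  · exact Or.inr ⟨hv, hn⟩

lemma neg_of_pos {v : V} (hv : v ∈ PosRoots α Δ) : -v ∈ NegRoots α Δ :=
  ⟨h.symm v hv.1, by rw [neg_neg]; exact hv.2⟩

lemma pos_of_neg {v : V} (hv : v ∈ NegRoots α Δ) : -v ∈ PosRoots α Δ :=
  ⟨h.symm v hv.1, hv.2⟩

lemma alpha_pos (s : S) : α s ∈ PosRoots α Δ := by
  classical
  refine ⟨h.pi_mem s, Finsupp.single s 1, ?_, ?_⟩
  · intro i
    rw [Finsupp.single_apply]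
    split <;> norm_num
  · rw [Finsupp.sum_single_index (zero_smul ℝ (α s)), one_smul]

lemma pos_add {v w : V} (hv : v ∈ PosRoots α Δ) (hw : w ∈ PosRoots α Δ)
    (hm : v + w ∈ Δ) : v + w ∈ PosRoots α Δ :=
  ⟨hm, posComb_add hv.2 hw.2⟩

lemma negr_add {v w : V} (hv : v ∈ NegRoots α Δ) (hw : w ∈ NegRoots α Δ)
    (hm : v + w ∈ Δ) : v + w ∈ NegRoots α Δ :=
  ⟨hm, by rw [neg_add]; exact posComb_add hv.2 hw.2⟩

lemma s_inv (s : S) : (s : W)⁻¹ = (s : W) :=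
  inv_eq_of_mul_eq_one_right (h.invol _ s.2).2

lemma eq_alpha_of_refl_neg (s : S) {β : V} (hβ : β ∈ PosRoots α Δ)
    (hn : ρ (s : W) β ∈ NegRoots α Δ) : β = α s := by
  by_contra hne
  have hmem : ρ (s : W) β ∈ PosRoots α Δ \ {α s} := by
    rw [← h.refl_perm s]
    exact ⟨β, ⟨hβ, hne⟩, rfl⟩
  exact not_both h hmem.1 hn

lemma exists_min_word (w : W) :
    ∃ l : List W, (∀ x ∈ l, x ∈ S) ∧ l.length = len S w ∧ l.prod = w := by
  have hw : w ∈ (Subgroup.closure S).toSubmonoid := by rw [h.gen]; trivial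
  rw [Subgroup.closure_toSubmonoid] at hw
  obtain ⟨l, hl, hp⟩ := Submonoid.exists_list_of_mem_closure hw
  have hl' : ∀ x ∈ l, x ∈ S := by
    intro x hx
    rcases hl x hx with hx' | hx'
    · exact hx'
    · rw [Set.mem_inv] at hx'
      have hxx : x⁻¹ = x := by
        rw [eq_inv_of_mul_eq_one_left (h.invol _ hx').2, inv_inv]
      rw [← hxx]; exact hx'
  have hne : {n | ∃ l : List W, (∀ x ∈ l, x ∈ S) ∧ l.length = n ∧ l.prod = w}.Nonempty :=
    ⟨l.length, l, hl', rfl, hp⟩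
  obtain ⟨l', h1, h2, h3⟩ := Nat.sInf_mem hne
  exact ⟨l', h1, h2, h3⟩

lemma exchange (s : S) :
    ∀ l : List W, (∀ x ∈ l, x ∈ S) → ρ l.prod (α s) ∈ NegRoots α Δ →
      ∃ l' : List W, (∀ x ∈ l', x ∈ S) ∧ l.length = l'.length + 1 ∧
        l'.prod = l.prod * (s : W) := by
  intro l
  induction l with
  | nil =>
    intro _ hneg
    simp only [List.prod_nil, map_one, Module.End.one_apply] at hneg
    exact absurd hneg (fun hn => not_both h (alpha_pos h s) hn)
  | cons t l ih =>
    intro hl hneg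
    have ht : t ∈ S := hl t (List.mem_cons_self ..)
    have hl' : ∀ x ∈ l, x ∈ S := fun x hx => hl x (List.mem_cons_of_mem _ hx)
    have hγΔ : ρ l.prod (α s) ∈ Δ := h.winv _ _ (h.pi_mem s)
    rcases pos_or_neg' h hγΔ with hpos | hneg'
    · have hneg2 : ρ ((⟨t, ht⟩ : S) : W) (ρ l.prod (α s)) ∈ NegRoots α Δ := by
        simpa [List.prod_cons, map_mul, Module.End.mul_apply] using hneg
      have hγ := eq_alpha_of_refl_neg h ⟨t, ht⟩ hpos hneg2
      have hconj := h.conj l.prod ⟨t, ht⟩ s hγ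
      refine ⟨l, hl', by simp, ?_⟩
      rw [List.prod_cons]
      conv_rhs => rw [show t = ((⟨t, ht⟩ : S) : W) from rfl, ← hconj]
      rw [inv_mul_cancel_right, mul_assoc, (h.invol _ s.2).2, mul_one]
    · obtain ⟨l', h1, h2, h3⟩ := ih hl' hneg'
      refine ⟨t :: l', ?_, by simp [h2], ?_⟩
      · intro x hx
        rcases List.mem_cons.1 hx with rfl | hx
        · exact ht
        · exact h1 x hx
      · rw [List.prod_cons, h3, List.prod_cons, mul_assoc]

lemma key_pos {w : W} (s : S) (hlen : len S w < len S (w * s)) :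
    ρ w (α s) ∈ PosRoots α Δ := by
  have hΔ : ρ w (α s) ∈ Δ := h.winv _ _ (h.pi_mem s)
  rcases pos_or_neg' h hΔ with hp | hn
  · exact hp
  exfalso
  obtain ⟨l, hl, hlen', hprod⟩ := exists_min_word h w
  obtain ⟨l', h1, h2, h3⟩ := exchange h s l hl (by rwa [hprod])
  have h3' : l'.prod = w * (s : W) := by rw [← hprod]; exact h3
  have hle := len_le (S := S) h1 h3'
  omega

variable {f : ℕ → S} (hf : InfRed S f)
include hf

lemma beta_pos (k : ℕ) : ρ (zword f k) (α (f k)) ∈ PosRoots α Δ := by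
  apply key_pos h
  rw [← zword_succ, hf k, hf (k + 1)]
  omega

lemma rho_succ_inv (p : ℕ) (v : V) :
    ρ (zword f (p + 1))⁻¹ v = ρ ((f p : W)) (ρ (zword f p)⁻¹ v) := by
  rw [zword_succ, mul_inv_rev, map_mul, Module.End.mul_apply, s_inv h]

lemma beta_mem (k : ℕ) : ρ (zword f k) (α (f k)) ∈ PhiInf ρ α Δ f := by
  refine Set.mem_iUnion.2 ⟨k + 1, beta_pos h hf k, ?_⟩
  rw [rho_succ_inv h hf, rho_cancel', h.refl_neg (f k)]
  exact neg_of_pos h (alpha_pos h (f k))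

lemma phi_mono (p : ℕ) : PhiSet ρ α Δ (zword f p) ⊆ PhiSet ρ α Δ (zword f (p + 1)) := by
  rintro β ⟨hβp, hβn⟩
  refine ⟨hβp, ?_⟩
  rw [rho_succ_inv h hf]
  by_cases hc : -(ρ (zword f p)⁻¹ β) = α (f p)
  · exfalso
    have hββ : β = -(ρ (zword f p) (α (f p))) := by
      rw [← hc, map_neg, neg_neg, rho_cancel]
    have hβneg : -(ρ (zword f p) (α (f p))) ∈ NegRoots α Δ :=
      neg_of_pos h (beta_pos h hf p)
    rw [← hββ] at hβneg
    exact not_both h hβp hβneg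
  · have hpos : -(ρ (zword f p)⁻¹ β) ∈ PosRoots α Δ := pos_of_neg h hβn
    have hmem : ρ ((f p : W)) (-(ρ (zword f p)⁻¹ β)) ∈ PosRoots α Δ \ {α (f p)} := by
      rw [← h.refl_perm (f p)]
      exact ⟨_, ⟨hpos, hc⟩, rfl⟩
    have := neg_of_pos h hmem.1
    rwa [map_neg, neg_neg] at this

lemma phi_mono' {p q : ℕ} (hpq : p ≤ q) :
    PhiSet ρ α Δ (zword f p) ⊆ PhiSet ρ α Δ (zword f q) := by
  induction q, hpq using Nat.le_induction with
  | base => exact subset_rfl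
  | succ q hq ih => exact ih.trans (phi_mono h hf q)

lemma phi_real (p : ℕ) : PhiSet ρ α Δ (zword f p) ⊆ RealRoots ρ α := by
  induction p with
  | zero =>
    rintro β ⟨hβp, hβn⟩
    exfalso
    have : zword f 0 = 1 := rfl
    rw [this, inv_one, map_one, Module.End.one_apply] at hβn
    exact not_both h hβp hβn
  | succ p ih =>
    rintro β ⟨hβp, hβn⟩
    rw [rho_succ_inv h hf] at hβn
    have hγΔ : ρ (zword f p)⁻¹ β ∈ Δ := h.winv _ _ hβp.1
    rcases pos_or_neg' h hγΔ with hpos | hneg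
    · have := eq_alpha_of_refl_neg h (f p) hpos hβn
      refine ⟨zword f p, f p, ?_⟩
      rw [← this, rho_cancel]
    · exact ih ⟨hβp, hneg⟩

lemma beta_ne {j k : ℕ} (hjk : j < k) :
    ρ (zword f j) (α (f j)) ≠ ρ (zword f k) (α (f k)) := by
  intro heq
  have hα : ρ ((zword f j)⁻¹ * zword f k) (α (f k)) = α (f j) := by
    rw [map_mul, Module.End.mul_apply, ← heq, rho_cancel']
  have hconj := h.conj _ (f j) (f k) hα
  set c := (zword f j)⁻¹ * zword f k with hc
  have hcf : c * (f k : W) = (f j : W) * c := by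
    rw [← hconj]; group
  have hM := zword_shift f (j + 1) (k - (j + 1))
  rw [show j + 1 + (k - (j + 1)) = k by omega] at hM
  set M := ((List.range (k - (j + 1))).map fun i => (f (j + 1 + i) : W)).prod with hMdef
  have h1 : M = (zword f (j + 1))⁻¹ * zword f k := by rw [hM]; group
  have hMc : M = (f j : W) * c := by
    rw [h1, zword_succ f j, mul_inv_rev, s_inv h (f j), hc]; group
  have hz : zword f (k + 1) = zword f j * M := by
    rw [zword_succ f k, hMc, ← hcf, hc]; group
  have hlen : len S (zword f (k + 1)) ≤ j + (k - (j + 1)) := by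
    have := len_le (S := S) (w := zword f (k + 1))
      (l := ((List.range j).map fun i => (f i : W)) ++
        ((List.range (k - (j + 1))).map fun i => (f (j + 1 + i) : W)))
      (by
        intro x hx
        rcases List.mem_append.1 hx with hx | hx <;>
        · simp only [List.mem_map] at hx
          obtain ⟨i, _, rfl⟩ := hx
          exact Subtype.coe_prop _)
      (by rw [List.prod_append]; exact hz.symm)
    simpa using this
  rw [hf (k + 1)] at hlen
  omega

lemma beta_inj : Function.Injective fun k => ρ (zword f k) (α (f k)) := by
  intro j k hjk
  by_contra hne
  rcases Nat.lt_or_ge j k with hlt | hge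
  · exact beta_ne h hf hlt hjk
  · exact beta_ne h hf (by omega : k < j) hjk.symm

end StatementAux


/-- Proposition 2.10(3): if `s` is an infinite reduced word of `(W, S)`, then `Φ̃^∞(s)` is an
infinite real biconvex set, i.e. it is infinite, contained in `Δ^re₊`, and both it and its
complement in `Δ₊` are convex sets in `Δ₊`. -/
theorem statement4 (ρ : Representation ℝ W V) (S : Set W) (α : S → V) (Δ : Set V)
    (h : RootSystemData ρ S α Δ) (f : ℕ → S) (hf : InfRed S f) :
    (PhiInf ρ α Δ f).Infinite ∧
      PhiInf ρ α Δ f ⊆ RealRoots ρ α ∩ PosRoots α Δ ∧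
      ConvexIn (PosRoots α Δ) (PhiInf ρ α Δ f) ∧
      ConvexIn (PosRoots α Δ) (PosRoots α Δ \ PhiInf ρ α Δ f) := by
  open StatementAux in
  refine ⟨?_, ?_, ⟨?_, ?_⟩, ⟨?_, ?_⟩⟩
  · exact Set.infinite_of_injective_forall_mem (beta_inj h hf) (beta_mem h hf)
  · intro β hβ
    obtain ⟨p, hβ'⟩ := Set.mem_iUnion.1 hβ
    exact ⟨phi_real h hf p hβ', hβ'.1⟩
  · intro β hβ
    obtain ⟨p, hβ'⟩ := Set.mem_iUnion.1 hβ
    exact hβ'.1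
  · intro x hx y hy hxy
    obtain ⟨p, hx'⟩ := Set.mem_iUnion.1 hx
    obtain ⟨q, hy'⟩ := Set.mem_iUnion.1 hy
    have hx'' := phi_mono' h hf (le_max_left p q) hx'
    have hy'' := phi_mono' h hf (le_max_right p q) hy'
    refine Set.mem_iUnion.2 ⟨max p q, hxy, ?_⟩
    rw [map_add]
    exact negr_add h hx''.2 hy''.2 (map_add (ρ (zword f (max p q))⁻¹) x y ▸
      h.winv _ _ hxy.1)
  · exact Set.diff_subset
  · rintro x ⟨hxP, hxN⟩ y ⟨hyP, hyN⟩ hxy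
    refine ⟨hxy, fun hmem => ?_⟩
    obtain ⟨p, hp⟩ := Set.mem_iUnion.1 hmem
    have hxpos : ρ (zword f p)⁻¹ x ∈ PosRoots α Δ := by
      rcases pos_or_neg' h (h.winv _ _ hxP.1) with hh | hh
      · exact hh
      · have hx' : x ∈ PhiInf ρ α Δ f := Set.mem_iUnion.2 ⟨p, hxP, hh⟩
        exact absurd hx' hxN
    have hypos : ρ (zword f p)⁻¹ y ∈ PosRoots α Δ := by
      rcases pos_or_neg' h (h.winv _ _ hyP.1) with hh | hh
      · exact hh
      · have hy' : y ∈ PhiInf ρ α Δ f := Set.mem_iUnion.2 ⟨p, hyP, hh⟩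
        exact absurd hy' hyN
    have := pos_add h hxpos hypos (by rw [← map_add]; exact hp.2.1)
    rw [← map_add] at this
    exact not_both h this hp.2

end
end

section
/- For infinite reduced words s, s′ of (W, S): s ∼ s′ if and only if Φ̃^∞(s) = Φ̃^∞(s′). -/
open scoped Pointwise

section

variable {W V : Type*} [Group W] [AddCommGroup V] [Module ℝ V]

namespace RSaux

variable {W V : Type*} [Group W] [AddCommGroup V] [Module ℝ V]
variable {ρ : Representation ℝ W V} {S : Set W} {α : S → V} {Δ : Set V}

lemma rho_mul_apply (x y : W) (v : V) : ρ (x * y) v = ρ x (ρ y v) := by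
  rw [map_mul]; rfl

lemma rho_inv_apply (w : W) (v : V) : ρ w⁻¹ (ρ w v) = v := by
  rw [← rho_mul_apply, inv_mul_cancel, map_one]; rfl

lemma rho_apply_inv (w : W) (v : V) : ρ w (ρ w⁻¹ v) = v := by
  rw [← rho_mul_apply, mul_inv_cancel, map_one]; rfl

variable (h : RootSystemData ρ S α Δ)
include h

lemma s_mul_self (s : S) : (s : W) * s = 1 := (h.invol s s.2).2

lemma s_inv (s : S) : (s : W)⁻¹ = s := inv_eq_of_mul_eq_one_right (s_mul_self h s)

lemma mem_neg_iff {v : V} : v ∈ NegRoots α Δ ↔ -v ∈ PosRoots α Δ := by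
  constructor
  · rintro ⟨h1, h2⟩; exact ⟨h.symm v h1, h2⟩
  · rintro ⟨h1, h2⟩
    refine ⟨?_, h2⟩
    have := h.symm _ h1; rwa [neg_neg] at this

lemma not_pos_and_neg {v : V} (hp : v ∈ PosRoots α Δ) (hn : v ∈ NegRoots α Δ) : False := by
  rcases h.pos_or_neg v hp.1 with ⟨_, hb⟩ | ⟨_, ha⟩
  · exact hb hn.2
  · exact ha hp.2

lemma pos_or_neg_mem {v : V} (hv : v ∈ Δ) : v ∈ PosRoots α Δ ∨ v ∈ NegRoots α Δ := by
  rcases h.pos_or_neg v hv with ⟨ha, _⟩ | ⟨hb, _⟩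
  · exact Or.inl ⟨hv, ha⟩
  · exact Or.inr ⟨hv, hb⟩

lemma alpha_pos (s : S) : α s ∈ PosRoots α Δ := by
  classical
  refine ⟨h.pi_mem s, Finsupp.single s 1, ?_, ?_⟩
  · intro i
    simp only [Finsupp.single_apply]
    split <;> norm_num
  · rw [Finsupp.sum_single_index] <;> simp

lemma prod_reverse {l : List W} (hl : ∀ x ∈ l, x ∈ S) : l.reverse.prod = l.prod⁻¹ := by
  induction l with
  | nil => simp
  | cons x l ih =>
    have hx : x⁻¹ = x := inv_eq_of_mul_eq_one_right (h.invol x (hl x (by simp))).2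
    simp only [List.reverse_cons, List.prod_append, List.prod_cons, List.prod_nil,
      mul_one, mul_inv_rev, hx]
    rw [ih (fun y hy => hl y (by simp [hy]))]

lemma exists_word (w : W) : ∃ l : List W, (∀ x ∈ l, x ∈ S) ∧ l.prod = w := by
  have hw : w ∈ Subgroup.closure S := by rw [h.gen]; trivial
  induction hw using Subgroup.closure_induction with
  | mem x hx => exact ⟨[x], by simpa using hx, by simp⟩
  | one => exact ⟨[], by simp, by simp⟩
  | mul a b _ _ iha ihb =>
    obtain ⟨la, hla, hpa⟩ := iha
    obtain ⟨lb, hlb, hpb⟩ := ihb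
    refine ⟨la ++ lb, ?_, by simp [hpa, hpb]⟩
    intro x hx
    rcases List.mem_append.mp hx with h' | h'
    exacts [hla x h', hlb x h']
  | inv a _ iha =>
    obtain ⟨la, hla, hpa⟩ := iha
    exact ⟨la.reverse, fun x hx => hla x (List.mem_reverse.mp hx),
      by rw [prod_reverse h hla, hpa]⟩

lemma len_le {l : List W} (hl : ∀ x ∈ l, x ∈ S) : len S l.prod ≤ l.length :=
  Nat.sInf_le ⟨l, hl, rfl, rfl⟩

lemma exists_reduced (w : W) :
    ∃ l : List W, (∀ x ∈ l, x ∈ S) ∧ l.length = len S w ∧ l.prod = w := by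
  have hne : {n | ∃ l : List W, (∀ x ∈ l, x ∈ S) ∧ l.length = n ∧ l.prod = w}.Nonempty := by
    obtain ⟨l, hl, hp⟩ := exists_word h w
    exact ⟨l.length, l, hl, rfl, hp⟩
  exact Nat.sInf_mem hne

lemma len_one : len S (1 : W) = 0 :=
  Nat.le_zero.mp (by simpa using len_le h (l := []) (by simp))

lemma eq_one_of_len {w : W} (hw : len S w = 0) : w = 1 := by
  obtain ⟨l, _, hlen, hp⟩ := exists_reduced h w
  rw [hw] at hlen
  rw [List.length_eq_zero_iff] at hlen
  rw [← hp, hlen, List.prod_nil]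

lemma len_mul_le (a b : W) : len S (a * b) ≤ len S a + len S b := by
  obtain ⟨la, hla, hlena, hpa⟩ := exists_reduced h a
  obtain ⟨lb, hlb, hlenb, hpb⟩ := exists_reduced h b
  have : (la ++ lb).prod = a * b := by simp [hpa, hpb]
  have hmem : ∀ x ∈ la ++ lb, x ∈ S := by
    intro x hx
    rcases List.mem_append.mp hx with h' | h'
    exacts [hla x h', hlb x h']
  calc len S (a * b) = len S ((la ++ lb).prod) := by rw [this]
    _ ≤ (la ++ lb).length := len_le h hmem
    _ = len S a + len S b := by simp [hlena, hlenb]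

lemma len_inv (w : W) : len S w⁻¹ = len S w := by
  have key : ∀ v : W, len S v⁻¹ ≤ len S v := by
    intro v
    obtain ⟨l, hl, hlen, hp⟩ := exists_reduced h v
    have : l.reverse.prod = v⁻¹ := by rw [prod_reverse h hl, hp]
    calc len S v⁻¹ = len S l.reverse.prod := by rw [this]
      _ ≤ l.reverse.length := len_le h (fun x hx => hl x (List.mem_reverse.mp hx))
      _ = len S v := by simp [hlen]
  exact le_antisymm (key w) (by simpa using key w⁻¹)

lemma len_s (s : S) : len S (s : W) ≤ 1 := by
  simpa using len_le h (l := [(s : W)]) (by simp)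

lemma len_mul_s_le (w : W) (s : S) : len S (w * s) ≤ len S w + 1 :=
  le_trans (len_mul_le h w s) (by have := len_s h s; omega)

lemma len_le_mul_s (w : W) (s : S) : len S w ≤ len S (w * s) + 1 := by
  have : (w * s) * s = w := by rw [mul_assoc, s_mul_self h, mul_one]
  calc len S w = len S ((w * s) * s) := by rw [this]
    _ ≤ len S (w * s) + 1 := len_mul_s_le h _ s

lemma exists_head {w : W} {n : ℕ} (hw : len S w = n + 1) :
    ∃ t : S, ∃ u : W, w = t * u ∧ len S u = n := by
  obtain ⟨l, hl, hlen, hp⟩ := exists_reduced h w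
  rw [hw] at hlen
  match l, hlen with
  | x :: l', hlen =>
    have hx : x ∈ S := hl x (by simp)
    have hl' : ∀ y ∈ l', y ∈ S := fun y hy => hl y (by simp [hy])
    refine ⟨⟨x, hx⟩, l'.prod, by simp [← hp], ?_⟩
    have hlen' : l'.length = n := by simpa using hlen
    have h1 : len S l'.prod ≤ n := by
      have := len_le h hl'
      omega
    have h2 : n ≤ len S l'.prod := by
      have hle : len S w ≤ len S x + len S l'.prod := by
        rw [← hp, List.prod_cons]; exact len_mul_le h x l'.prod
      have hx1 : len S x ≤ 1 := len_s h ⟨x, hx⟩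
      omega
    omega

lemma exists_last {w : W} {n : ℕ} (hw : len S w = n + 1) :
    ∃ u : W, ∃ t : S, w = u * t ∧ len S u = n := by
  have hw' : len S w⁻¹ = n + 1 := by rw [len_inv h]; exact hw
  obtain ⟨t, u, he, hu⟩ := exists_head h hw'
  refine ⟨u⁻¹, t, ?_, by rw [len_inv h]; exact hu⟩
  have := congrArg (·⁻¹) he
  simp only [inv_inv, mul_inv_rev] at this
  rw [this, s_inv h]

lemma keyB : ∀ n : ℕ, ∀ w : W, ∀ s : S, len S w ≤ n → len S w ≤ len S (w * s) →
    ρ w (α s) ∈ PosRoots α Δ := by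
  intro n
  induction n with
  | zero =>
    intro w s hw _
    have : w = 1 := eq_one_of_len h (Nat.le_zero.mp hw)
    rw [this, map_one]
    exact alpha_pos h s
  | succ n ih =>
    intro w s hw hws
    rcases Nat.lt_or_ge (len S w) (n + 1) with hlt | hge
    · exact ih w s (by omega) hws
    · have hwn : len S w = n + 1 := le_antisymm hw hge
      obtain ⟨t, u, he, hu⟩ := exists_head h hwn
      have hus : len S u ≤ len S (u * s) := by
        have h1 : len S (w * s) ≤ 1 + len S (u * s) := by
          rw [he, mul_assoc]
          have := len_mul_le h (t : W) (u * s)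
          have := len_s h t
          omega
        omega
      have hpos : ρ u (α s) ∈ PosRoots α Δ := ih u s (by omega) hus
      by_cases hc : ρ u (α s) = α t
      · exfalso
        have hconj : u * (s : W) * u⁻¹ = (t : W) := h.conj u t s hc
        have : w * s = u := by
          rw [he, ← hconj]
          group
          rw [mul_assoc, s_mul_self h, mul_one]
        rw [this] at hws
        omega
      · have : ρ (t : W) (ρ u (α s)) ∈ PosRoots α Δ \ {α t} := by
          rw [← h.refl_perm t]
          exact ⟨ρ u (α s), ⟨hpos, hc⟩, rfl⟩
        rw [he, rho_mul_apply]
        exact this.1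

lemma pos_of_le (w : W) (s : S) (hle : len S w ≤ len S (w * s)) :
    ρ w (α s) ∈ PosRoots α Δ :=
  keyB h (len S w) w s le_rfl hle

lemma neg_of_lt (w : W) (s : S) (hlt : len S (w * s) < len S w) :
    ρ w (α s) ∈ NegRoots α Δ := by
  have hws : (w * s) * s = w := by rw [mul_assoc, s_mul_self h, mul_one]
  have hpos : ρ (w * s) (α s) ∈ PosRoots α Δ := by
    apply pos_of_le h
    rw [hws]; omega
  rw [mem_neg_iff h]
  have : -ρ w (α s) = ρ (w * s) (α s) := by
    rw [rho_mul_apply, h.refl_neg s, map_neg]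
  rw [this]
  exact hpos

lemma len_mul_s_ne (w : W) (s : S) : len S (w * s) ≠ len S w := by
  intro he
  have h1 : ρ w (α s) ∈ PosRoots α Δ := pos_of_le h w s he.symm.le
  have hws : (w * s) * s = w := by rw [mul_assoc, s_mul_self h, mul_one]
  have h2 : ρ (w * s) (α s) ∈ PosRoots α Δ := by
    apply pos_of_le h
    rw [hws, he]
  have h3 : ρ w (α s) ∈ NegRoots α Δ := by
    rw [mem_neg_iff h]
    have : -ρ w (α s) = ρ (w * s) (α s) := by
      rw [rho_mul_apply, h.refl_neg s, map_neg]
    rw [this]; exact h2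
  exact not_pos_and_neg h h1 h3

lemma pos_iff (w : W) (s : S) :
    ρ w (α s) ∈ PosRoots α Δ ↔ len S (w * s) = len S w + 1 := by
  have hne := len_mul_s_ne h w s
  have hle := len_mul_s_le h w s
  have hge := len_le_mul_s h w s
  constructor
  · intro hp
    rcases Nat.lt_or_ge (len S (w * s)) (len S w) with hlt | hge'
    · exact absurd (neg_of_lt h w s hlt) (fun hn => not_pos_and_neg h hp hn)
    · omega
  · intro hl
    exact pos_of_le h w s (by omega)

lemma neg_iff (w : W) (s : S) :
    ρ w (α s) ∈ NegRoots α Δ ↔ len S (w * s) + 1 = len S w := by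
  have hne := len_mul_s_ne h w s
  have hle := len_mul_s_le h w s
  have hge := len_le_mul_s h w s
  constructor
  · intro hn
    rcases Nat.lt_or_ge (len S (w * s)) (len S w) with hlt | hge'
    · omega
    · exact absurd (pos_of_le h w s hge') (fun hp => not_pos_and_neg h hp hn)
  · intro hl
    exact neg_of_lt h w s (by omega)

lemma pos_iff_left (w : W) (s : S) :
    ρ w⁻¹ (α s) ∈ PosRoots α Δ ↔ len S ((s : W) * w) = len S w + 1 := by
  have he : len S ((s : W) * w) = len S (w⁻¹ * s) := by
    rw [← len_inv h (w⁻¹ * (s : W))]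
    congr 1
    rw [mul_inv_rev, inv_inv, s_inv h]
  rw [he, ← len_inv h w]
  exact pos_iff h w⁻¹ s

lemma neg_iff_left (w : W) (s : S) :
    ρ w⁻¹ (α s) ∈ NegRoots α Δ ↔ len S ((s : W) * w) + 1 = len S w := by
  have he : len S ((s : W) * w) = len S (w⁻¹ * s) := by
    rw [← len_inv h (w⁻¹ * (s : W))]
    congr 1
    rw [mul_inv_rev, inv_inv, s_inv h]
  rw [he, ← len_inv h w]
  exact neg_iff h w⁻¹ s

lemma mem_PhiSet {β : V} {y : W} :
    β ∈ PhiSet ρ α Δ y ↔ β ∈ PosRoots α Δ ∧ ρ y⁻¹ β ∈ NegRoots α Δ := Iff.rfl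

lemma Phi_one : PhiSet ρ α Δ (1 : W) = ∅ := by
  rw [Set.eq_empty_iff_forall_notMem]
  rintro β ⟨hp, hn⟩
  rw [inv_one, map_one] at hn
  exact not_pos_and_neg h hp hn

lemma Phi_step_subset (w : W) (s : S) :
    PhiSet ρ α Δ (w * s) ⊆ PhiSet ρ α Δ w ∪ {ρ w (α s)} := by
  rintro β ⟨hb, hn⟩
  have hinv : (w * (s : W))⁻¹ = (s : W) * w⁻¹ := by rw [mul_inv_rev, s_inv h]
  rw [hinv, rho_mul_apply] at hn
  set γ := ρ w⁻¹ β with hγ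
  have hβγ : β = ρ w γ := (rho_apply_inv w β).symm
  have hγΔ : γ ∈ Δ := h.winv w⁻¹ β hb.1
  rcases pos_or_neg_mem h hγΔ with hgp | hgn
  · by_cases hc : γ = α s
    · right
      rw [hβγ, hc]; rfl
    · exfalso
      have : ρ (s : W) γ ∈ PosRoots α Δ \ {α s} := by
        rw [← h.refl_perm s]
        exact ⟨γ, ⟨hgp, hc⟩, rfl⟩
      exact not_pos_and_neg h this.1 hn
  · exact Or.inl ⟨hb, hgn⟩

lemma Phi_mono_step (w : W) (s : S) (hl : len S (w * s) = len S w + 1) :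
    PhiSet ρ α Δ w ⊆ PhiSet ρ α Δ (w * s) := by
  rintro β ⟨hb, hn⟩
  refine ⟨hb, ?_⟩
  have hinv : (w * (s : W))⁻¹ = (s : W) * w⁻¹ := by rw [mul_inv_rev, s_inv h]
  rw [hinv, rho_mul_apply]
  set γ := ρ w⁻¹ β with hγ
  have hβγ : β = ρ w γ := (rho_apply_inv w β).symm
  have hng : -γ ∈ PosRoots α Δ := (mem_neg_iff h).mp hn
  by_cases hc : -γ = α s
  · exfalso
    have : β = -ρ w (α s) := by
      rw [hβγ, ← hc, map_neg, neg_neg]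
    have hβneg : β ∈ NegRoots α Δ := by
      rw [mem_neg_iff h, this, neg_neg]
      exact (pos_iff h w s).mpr hl
    exact not_pos_and_neg h hb hβneg
  · have : ρ (s : W) (-γ) ∈ PosRoots α Δ \ {α s} := by
      rw [← h.refl_perm s]
      exact ⟨-γ, ⟨hng, hc⟩, rfl⟩
    rw [mem_neg_iff h, ← map_neg]
    exact this.1

lemma Phi_finite (w : W) : (PhiSet ρ α Δ w).Finite := by
  suffices H : ∀ n : ℕ, ∀ w : W, len S w = n → (PhiSet ρ α Δ w).Finite by
    exact H (len S w) w rfl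
  intro n
  induction n with
  | zero =>
    intro w hw
    rw [eq_one_of_len h hw, Phi_one h]
    exact Set.finite_empty
  | succ n ih =>
    intro w hw
    obtain ⟨u, t, he, hu⟩ := exists_last h hw
    have : PhiSet ρ α Δ w ⊆ PhiSet ρ α Δ u ∪ {ρ u (α t)} := by
      rw [he]; exact Phi_step_subset h u t
    exact Set.Finite.subset ((ih u hu).union (Set.finite_singleton _)) this

lemma Phi_mono_mul : ∀ n : ℕ, ∀ x y : W, len S y = n →
    len S (x * y) = len S x + len S y → PhiSet ρ α Δ x ⊆ PhiSet ρ α Δ (x * y) := by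
  intro n
  induction n with
  | zero =>
    intro x y hy _
    rw [eq_one_of_len h hy, mul_one]
  | succ n ih =>
    intro x y hy hl
    obtain ⟨u, t, he, hu⟩ := exists_last h hy
    have hxu : len S (x * u) = len S x + n := by
      have h1 : len S (x * y) ≤ len S (x * u) + 1 := by
        rw [he, ← mul_assoc]
        exact len_mul_s_le h (x * u) t
      have h2 : len S (x * u) ≤ len S x + n := by
        have := len_mul_le h x u
        omega
      omega
    have hstep : len S ((x * u) * t) = len S (x * u) + 1 := by
      rw [mul_assoc, ← he, hl, hxu, hy]
      omega
    calc PhiSet ρ α Δ x ⊆ PhiSet ρ α Δ (x * u) := ih x u hu (by omega)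
      _ ⊆ PhiSet ρ α Δ ((x * u) * t) := Phi_mono_step h (x * u) t hstep
      _ = PhiSet ρ α Δ (x * y) := by rw [mul_assoc, ← he]

lemma lenF : ∀ n : ℕ, ∀ x y : W, len S x = n →
    PhiSet ρ α Δ x ⊆ PhiSet ρ α Δ y → len S (x⁻¹ * y) = len S y - len S x := by
  intro n
  induction n with
  | zero =>
    intro x y hx _
    rw [eq_one_of_len h hx, inv_one, one_mul, len_one h]
    omega
  | succ n ih =>
    intro x y hx hsub
    obtain ⟨t, x', he, hx'⟩ := exists_head h hx
    have hposx' : ρ x'⁻¹ (α t) ∈ PosRoots α Δ := by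
      rw [pos_iff_left h x' t, ← he, hx, hx']
    have hax : α t ∈ PhiSet ρ α Δ x := by
      refine ⟨alpha_pos h t, ?_⟩
      have hxinv : x⁻¹ = x'⁻¹ * t := by
        rw [he, mul_inv_rev, s_inv h]
      rw [hxinv, rho_mul_apply, h.refl_neg t, map_neg, mem_neg_iff h, neg_neg]
      exact hposx'
    have hay : α t ∈ PhiSet ρ α Δ y := hsub hax
    have hty : len S ((t : W) * y) + 1 = len S y := by
      rw [← neg_iff_left h y t]
      exact hay.2
    have hsub' : PhiSet ρ α Δ x' ⊆ PhiSet ρ α Δ ((t : W) * y) := by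
      rintro β ⟨hb, hn⟩
      have hbne : β ≠ α t := by
        intro hc
        rw [hc] at hn
        exact not_pos_and_neg h hposx' hn
      have hsb : ρ (t : W) β ∈ PosRoots α Δ \ {α t} := by
        rw [← h.refl_perm t]
        exact ⟨β, ⟨hb, hbne⟩, rfl⟩
      have hsbx : ρ (t : W) β ∈ PhiSet ρ α Δ x := by
        refine ⟨hsb.1, ?_⟩
        have hxinv : x⁻¹ = x'⁻¹ * t := by rw [he, mul_inv_rev, s_inv h]
        rw [hxinv, rho_mul_apply, ← rho_mul_apply, ← rho_mul_apply,
          mul_assoc, s_mul_self h, mul_one]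
        exact hn
      have hsby : ρ (t : W) β ∈ PhiSet ρ α Δ y := hsub hsbx
      refine ⟨hb, ?_⟩
      have : ((t : W) * y)⁻¹ = y⁻¹ * t := by rw [mul_inv_rev, s_inv h]
      rw [this, rho_mul_apply]
      exact hsby.2
    have hrec := ih x' ((t : W) * y) hx' hsub'
    have hxy : x'⁻¹ * ((t : W) * y) = x⁻¹ * y := by
      rw [he, mul_inv_rev, s_inv h, mul_assoc]
    rw [hxy] at hrec
    rw [hrec, hx, hx', ← hty]
    omega

omit h in
lemma zword_succ {f : ℕ → S} (p : ℕ) : zword f (p + 1) = zword f p * f p := by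
  simp [zword, List.range_succ]

lemma Phi_z_mono {f : ℕ → S} (hf : InfRed S f) {m m' : ℕ} (hmm : m ≤ m') :
    PhiSet ρ α Δ (zword f m) ⊆ PhiSet ρ α Δ (zword f m') := by
  induction m' , hmm using Nat.le_induction with
  | base => exact subset_rfl
  | succ k hk ih =>
    refine ih.trans ?_
    rw [zword_succ k]
    exact Phi_mono_step h (zword f k) (f k) (by rw [← zword_succ k, hf k, hf (k + 1)])

lemma Phi_sub_of_len {f g : ℕ → S} (hf : InfRed S f) (hg : InfRed S g) {p p₀ : ℕ}
    (hp : p ≤ p₀) (hlen : len S ((zword f p)⁻¹ * zword g p₀) = p₀ - p) :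
    PhiSet ρ α Δ (zword f p) ⊆ PhiSet ρ α Δ (zword g p₀) := by
  have hxy : zword f p * ((zword f p)⁻¹ * zword g p₀) = zword g p₀ := by group
  have := Phi_mono_mul h (len S ((zword f p)⁻¹ * zword g p₀)) (zword f p)
    ((zword f p)⁻¹ * zword g p₀) rfl
    (by rw [hxy, hf p, hlen, hg p₀]; omega)
  rwa [hxy] at this

lemma exists_len_eq {f g : ℕ → S} (hf : InfRed S f) (hg : InfRed S g)
    (hsub : PhiInf ρ α Δ f ⊆ PhiInf ρ α Δ g) (p : ℕ) :
    ∃ p₀ ≥ p, len S ((zword f p)⁻¹ * zword g p₀) = p₀ - p := by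
  classical
  have hfin := Phi_finite h (ρ := ρ) (α := α) (Δ := Δ) (zword f p)
  set F := hfin.toFinset with hF
  have hmem : ∀ β ∈ F, β ∈ PhiInf ρ α Δ g := by
    intro β hb
    exact hsub (Set.mem_iUnion.mpr ⟨p, hfin.mem_toFinset.mp hb⟩)
  have hch : ∀ β : V, ∃ m : ℕ, β ∈ F → β ∈ PhiSet ρ α Δ (zword g m) := by
    intro β
    by_cases hb : β ∈ F
    · obtain ⟨m, hm⟩ := Set.mem_iUnion.mp (hmem β hb)
      exact ⟨m, fun _ => hm⟩
    · exact ⟨0, fun c => absurd c hb⟩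
  choose idx hidx using hch
  refine ⟨max p (F.sup idx), le_max_left _ _, ?_⟩
  have hsub2 : PhiSet ρ α Δ (zword f p) ⊆ PhiSet ρ α Δ (zword g (max p (F.sup idx))) := by
    intro β hb
    have hbF : β ∈ F := hfin.mem_toFinset.mpr hb
    have h1 : β ∈ PhiSet ρ α Δ (zword g (idx β)) := hidx β hbF
    have h2 : idx β ≤ max p (F.sup idx) :=
      le_trans (Finset.le_sup hbF) (le_max_right _ _)
    exact Phi_z_mono h hg h2 h1
  have := lenF h (len S (zword f p)) (zword f p) (zword g (max p (F.sup idx))) rfl hsub2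
  rw [this, hf p, hg (max p (F.sup idx))]

end RSaux

/-- Proposition 2.10(4): for infinite reduced words `s, s′` of `(W, S)`,
`s ∼ s′` if and only if `Φ̃^∞(s) = Φ̃^∞(s′)`. -/
theorem statement5 (ρ : Representation ℝ W V) (S : Set W) (α : S → V) (Δ : Set V)
    (h : RootSystemData ρ S α Δ) (f g : ℕ → S) (hf : InfRed S f) (hg : InfRed S g) :
    wrel S f g ↔ PhiInf ρ α Δ f = PhiInf ρ α Δ g := by
  constructor
  · intro hrel
    apply Set.Subset.antisymm
    · intro β hb
      obtain ⟨p, hp⟩ := Set.mem_iUnion.mp hb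
      obtain ⟨p₀, hp₀, q₀, hq₀, h1, h2⟩ := hrel p 0
      exact Set.mem_iUnion.mpr ⟨p₀, RSaux.Phi_sub_of_len h hf hg hp₀ h1 hp⟩
    · intro β hb
      obtain ⟨q, hq⟩ := Set.mem_iUnion.mp hb
      obtain ⟨p₀, hp₀, q₀, hq₀, h1, h2⟩ := hrel 0 q
      exact Set.mem_iUnion.mpr ⟨q₀, RSaux.Phi_sub_of_len h hg hf hq₀ h2 hq⟩
  · intro heq p q
    obtain ⟨p₀, hp₀, hl1⟩ := RSaux.exists_len_eq h hf hg heq.subset p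
    obtain ⟨q₀, hq₀, hl2⟩ := RSaux.exists_len_eq h hg hf heq.superset q
    exact ⟨p₀, hp₀, q₀, hq₀, hl1, hl2⟩

end
end

section
/- For x ∈ W and an infinite reduced word s of (W, S), setting Ω = xΦ̃^∞(s) ∩ Δ^re₋, one has the disjoint union Φ̃^∞(x, s) = (Φ(x)∖(−Ω)) ⊔ (xΦ̃^∞(s)∖Ω). In particular, if xΦ̃^∞(s) ⊆ Δ^re₊, then Φ̃^∞(x, s) = Φ(x) ⊔ xΦ̃^∞(s). -/
open scoped Pointwise

section

variable {W V : Type*} [Group W] [AddCommGroup V] [Module ℝ V]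

/-- `Φ̃^∞(x, s) = {β ∈ Δ^re₊ | ∃ p₀, ∀ p ≥ p₀, (x z_s(p))⁻¹(β) < 0}`. -/
def PhiInfX (ρ : Representation ℝ W V) {S : Set W} (α : S → V) (Δ : Set V) (x : W)
    (f : ℕ → S) : Set V :=
  {β ∈ RealRoots ρ α ∩ PosRoots α Δ |
    ∃ p₀ : ℕ, ∀ p ≥ p₀, ρ (x * zword f p)⁻¹ β ∈ NegRoots α Δ}

namespace Aux6

variable {ρ : Representation ℝ W V} {S : Set W} {α : S → V} {Δ : Set V}

lemma rho_mul_apply (ρ : Representation ℝ W V) (a b : W) (v : V) :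
    ρ (a * b) v = ρ a (ρ b v) := by rw [map_mul]; rfl

lemma rho_cancel (ρ : Representation ℝ W V) (w : W) (v : V) : ρ w⁻¹ (ρ w v) = v := by
  rw [← rho_mul_apply, inv_mul_cancel, map_one]; rfl

lemma rho_cancel' (ρ : Representation ℝ W V) (w : W) (v : V) : ρ w (ρ w⁻¹ v) = v := by
  rw [← rho_mul_apply, mul_inv_cancel, map_one]; rfl

lemma coe_inv (h : RootSystemData ρ S α Δ) (s : S) : ((s : W))⁻¹ = (s : W) :=
  inv_eq_of_mul_eq_one_right (h.invol s s.2).2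

lemma not_pos_and_neg (h : RootSystemData ρ S α Δ) {v : V}
    (hp : v ∈ PosRoots α Δ) (hn : v ∈ NegRoots α Δ) : False := by
  rcases h.pos_or_neg v hp.1 with ⟨_, hb⟩ | ⟨_, ha⟩
  · exact hb hn.2
  · exact ha hp.2

lemma pos_or_neg' (h : RootSystemData ρ S α Δ) {v : V} (hv : v ∈ Δ) :
    v ∈ PosRoots α Δ ∨ v ∈ NegRoots α Δ := by
  rcases h.pos_or_neg v hv with ⟨ha, _⟩ | ⟨hb, _⟩
  · exact Or.inl ⟨hv, ha⟩
  · exact Or.inr ⟨hv, hb⟩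

lemma neg_mem_neg_iff (h : RootSystemData ρ S α Δ) {v : V} :
    v ∈ PosRoots α Δ ↔ -v ∈ NegRoots α Δ := by
  constructor
  · rintro ⟨h1, h2⟩; exact ⟨h.symm v h1, by rwa [neg_neg]⟩
  · rintro ⟨h1, h2⟩
    refine ⟨?_, by rwa [neg_neg] at h2⟩
    have := h.symm _ h1; rwa [neg_neg] at this

lemma alpha_pos (h : RootSystemData ρ S α Δ) (s : S) : α s ∈ PosRoots α Δ := by
  refine ⟨h.pi_mem s, Finsupp.single s 1, fun i => ?_, ?_⟩
  · rcases eq_or_ne s i with rfl | hne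
    · simp
    · simp [Finsupp.single_apply_eq_zero.mpr fun hc => absurd hc.symm hne]
  · rw [Finsupp.sum_single_index (by simp)]; simp

lemma refl_pos (h : RootSystemData ρ S α Δ) (s : S) {v : V}
    (hv : v ∈ PosRoots α Δ) (hne : v ≠ α s) :
    ρ (s : W) v ∈ PosRoots α Δ ∧ ρ (s : W) v ≠ α s := by
  have : ρ (s : W) v ∈ PosRoots α Δ \ {α s} := by
    rw [← h.refl_perm s]; exact ⟨v, ⟨hv, hne⟩, rfl⟩
  exact ⟨this.1, this.2⟩

lemma refl_neg' (h : RootSystemData ρ S α Δ) (s : S) {v : V}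
    (hv : v ∈ NegRoots α Δ) (hne : v ≠ -α s) :
    ρ (s : W) v ∈ NegRoots α Δ := by
  have hpos : -v ∈ PosRoots α Δ := by
    rw [neg_mem_neg_iff h, neg_neg]; exact hv
  have hne' : -v ≠ α s := fun hc => hne (by rw [← hc, neg_neg])
  have := (refl_pos h s hpos hne').1
  rw [neg_mem_neg_iff h] at this
  rwa [map_neg, neg_neg] at this

/-- Every positive root sent to a negative root by some group element is a real root. -/
lemma real_of_phi (h : RootSystemData ρ S α Δ) :
    ∀ (l : List S) (β : V), β ∈ PosRoots α Δ →
      ρ ((l.map Subtype.val).prod)⁻¹ β ∈ NegRoots α Δ → β ∈ RealRoots ρ α := by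
  intro l
  induction l with
  | nil =>
    intro β hp hn
    simp only [List.map_nil, List.prod_nil, inv_one, map_one] at hn
    exact absurd (not_pos_and_neg h hp hn) (by simp)
  | cons t l ih =>
    intro β hp hn
    rcases eq_or_ne β (α t) with rfl | hne
    · exact ⟨1, t, by rw [map_one]; rfl⟩
    · have hrec : ρ ((l.map Subtype.val).prod)⁻¹ (ρ (t : W) β) ∈ NegRoots α Δ := by
        have : ((t : W) * (l.map Subtype.val).prod)⁻¹ =
            ((l.map Subtype.val).prod)⁻¹ * (t : W) := by
          rw [mul_inv_rev, coe_inv h]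
        rw [List.map_cons, List.prod_cons, this, rho_mul_apply] at hn
        exact hn
      have hpos := (refl_pos h t hp hne).1
      rcases ih (ρ (t : W) β) hpos hrec with ⟨u, r, hu⟩
      refine ⟨(t : W) * u, r, ?_⟩
      have : ρ (t : W) (ρ (t : W) β) = β := by
        rw [← rho_mul_apply, (h.invol t t.2).2, map_one]; rfl
      rw [rho_mul_apply, ← hu, this]

/-- The exchange property: if `w α_t < 0` for a word `w` of length `n`,
then `w t` has a word of length `n - 1`. -/
lemma exchange (h : RootSystemData ρ S α Δ) :
    ∀ (l : List S) (t : S), ρ ((l.map Subtype.val).prod) (α t) ∈ NegRoots α Δ →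
      ∃ l' : List S, l'.length + 1 = l.length ∧
        (l'.map Subtype.val).prod = (l.map Subtype.val).prod * t := by
  intro l
  induction l with
  | nil =>
    intro t hn
    simp only [List.map_nil, List.prod_nil, map_one] at hn
    exact absurd (not_pos_and_neg h (alpha_pos h t) hn) (by simp)
  | cons r l ih =>
    intro t hn
    rw [List.map_cons, List.prod_cons, rho_mul_apply] at hn
    set P := (l.map Subtype.val).prod with hP
    have hδΔ : ρ P (α t) ∈ Δ := h.winv P _ (h.pi_mem t)
    rcases pos_or_neg' h hδΔ with hpos | hneg
    · rcases eq_or_ne (ρ P (α t)) (α r) with heq | hne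
      · have hconj : P * (t : W) * P⁻¹ = (r : W) := h.conj P r t heq
        refine ⟨l, by simp, ?_⟩
        have : (r : W) * P * (t : W) = P * ((t : W) * (t : W)) := by
          rw [← hconj]; group
        rw [List.map_cons, List.prod_cons, ← hP, this, (h.invol t t.2).2, mul_one]
      · exact absurd (not_pos_and_neg h (refl_pos h r hpos hne).1 hn) (by simp)
    · rcases ih t hneg with ⟨l', hlen, hprod⟩
      refine ⟨r :: l', by simp [← hlen], ?_⟩
      rw [List.map_cons, List.prod_cons, hprod, List.map_cons, List.prod_cons, mul_assoc]

lemma len_le (w : W) (l : List S) (hp : (l.map Subtype.val).prod = w) :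
    len S w ≤ l.length := by
  apply Nat.sInf_le
  refine ⟨l.map Subtype.val, ?_, by simp, hp⟩
  intro y hy
  rcases List.mem_map.mp hy with ⟨s, _, rfl⟩
  exact s.2

lemma exists_word (h : RootSystemData ρ S α Δ) (x : W) :
    ∃ l : List S, (l.map Subtype.val).prod = x := by
  have hx : x ∈ Subgroup.closure S := by rw [h.gen]; trivial
  induction hx using Subgroup.closure_induction with
  | mem y hy => exact ⟨[⟨y, hy⟩], by simp⟩
  | one => exact ⟨[], by simp⟩
  | mul a b _ _ iha ihb =>
    rcases iha with ⟨la, hla⟩; rcases ihb with ⟨lb, hlb⟩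
    exact ⟨la ++ lb, by rw [List.map_append, List.prod_append, hla, hlb]⟩
  | inv a _ iha =>
    rcases iha with ⟨la, hla⟩
    refine ⟨la.reverse, ?_⟩
    rw [← hla, List.map_reverse, List.prod_reverse_noncomm]
    apply congrArg (·⁻¹)
    apply congrArg List.prod
    rw [List.map_map]
    apply List.map_congr_left
    intro s _
    simp [Function.comp, coe_inv h]

lemma zword_list (f : ℕ → S) (p : ℕ) :
    ((((List.range p).map f)).map Subtype.val).prod = zword f p := by
  rw [List.map_map]; rfl

lemma zword_succ (f : ℕ → S) (p : ℕ) : zword f (p + 1) = zword f p * (f p : W) := by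
  simp [zword, List.range_succ]

lemma phi_mono (h : RootSystemData ρ S α Δ) {f : ℕ → S} (hf : InfRed S f)
    {p q : ℕ} (hpq : p ≤ q) : PhiSet ρ α Δ (zword f p) ⊆ PhiSet ρ α Δ (zword f q) := by
  induction q, hpq using Nat.le_induction with
  | base => exact subset_rfl
  | succ q hq ih =>
    refine ih.trans ?_
    rintro β ⟨hβp, hβn⟩
    set γ := ρ (zword f q)⁻¹ β with hγ
    refine ⟨hβp, ?_⟩
    have hz : ρ (zword f (q + 1))⁻¹ β = ρ ((f q : W)) γ := by
      rw [zword_succ, mul_inv_rev, coe_inv h, rho_mul_apply]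
    rcases eq_or_ne γ (-(α (f q))) with heq | hne
    · exfalso
      have hβeq : ρ (zword f q) (α (f q)) = -β := by
        have : ρ (zword f q) γ = β := by
          rw [hγ, ← rho_mul_apply, mul_inv_cancel, map_one]; rfl
        rw [← neg_neg (α (f q)), ← heq, map_neg, this]
      have hneg : ρ (zword f q) (α (f q)) ∈ NegRoots α Δ := by
        rw [hβeq, ← neg_mem_neg_iff h]; exact hβp
      have hex := exchange h ((List.range q).map f) (f q)
        (by rwa [zword_list])
      rcases hex with ⟨l', hlen, hprod⟩
      rw [zword_list, ← zword_succ] at hprod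
      have h1 : len S (zword f (q + 1)) ≤ l'.length := len_le _ _ hprod
      have h2 : l'.length + 1 = q := by simpa using hlen
      rw [hf (q + 1)] at h1
      omega
    · rw [hz]
      exact refl_neg' h (f q) hβn hne

lemma phiInf_pos (h : RootSystemData ρ S α Δ) {f : ℕ → S} {γ : V}
    (hγ : γ ∈ PhiInf ρ α Δ f) : γ ∈ PosRoots α Δ := by
  rcases Set.mem_iUnion.mp hγ with ⟨p, hp⟩
  exact hp.1

lemma phiInf_real (h : RootSystemData ρ S α Δ) {f : ℕ → S} {γ : V}
    (hγ : γ ∈ PhiInf ρ α Δ f) : γ ∈ RealRoots ρ α := by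
  rcases Set.mem_iUnion.mp hγ with ⟨p, hp⟩
  exact real_of_phi h ((List.range p).map f) γ hp.1 (by rw [zword_list]; exact hp.2)

lemma real_neg (h : RootSystemData ρ S α Δ) {v : V} (hv : v ∈ RealRoots ρ α) :
    -v ∈ RealRoots ρ α := by
  rcases hv with ⟨u, r, hu⟩
  refine ⟨u * (r : W), r, ?_⟩
  rw [rho_mul_apply, h.refl_neg r, map_neg, ← hu]

lemma real_smul (h : RootSystemData ρ S α Δ) (w : W) {v : V} (hv : v ∈ RealRoots ρ α) :
    ρ w v ∈ RealRoots ρ α := by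
  rcases hv with ⟨u, r, hu⟩
  exact ⟨w * u, r, by rw [rho_mul_apply, ← hu]⟩

end Aux6

open Aux6

/-- Lemma 2.13(3): for `x ∈ W` and an infinite reduced word `s`, with
`Ω = xΦ̃^∞(s) ∩ Δ^re₋`, one has the disjoint union
`Φ̃^∞(x, s) = (Φ(x) ∖ (−Ω)) ⊔ (xΦ̃^∞(s) ∖ Ω)`; in particular, if `xΦ̃^∞(s) ⊆ Δ^re₊`,
then `Φ̃^∞(x, s) = Φ(x) ⊔ xΦ̃^∞(s)`. -/
theorem statement6 (ρ : Representation ℝ W V) (S : Set W) (α : S → V) (Δ : Set V)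
    (h : RootSystemData ρ S α Δ) (x : W) (f : ℕ → S) (hf : InfRed S f)
    (Ω : Set V) (hΩ : Ω = (⇑(ρ x) '' PhiInf ρ α Δ f) ∩ (RealRoots ρ α ∩ NegRoots α Δ)) :
    (Disjoint (PhiSet ρ α Δ x \ (-Ω)) ((⇑(ρ x) '' PhiInf ρ α Δ f) \ Ω) ∧
      PhiInfX ρ α Δ x f =
        (PhiSet ρ α Δ x \ (-Ω)) ∪ ((⇑(ρ x) '' PhiInf ρ α Δ f) \ Ω)) ∧
      (⇑(ρ x) '' PhiInf ρ α Δ f ⊆ RealRoots ρ α ∩ PosRoots α Δ →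
        Disjoint (PhiSet ρ α Δ x) (⇑(ρ x) '' PhiInf ρ α Δ f) ∧
          PhiInfX ρ α Δ x f = PhiSet ρ α Δ x ∪ ⇑(ρ x) '' PhiInf ρ α Δ f) := by
  subst hΩ
  set X := ⇑(ρ x) '' PhiInf ρ α Δ f with hX
  set Ω := X ∩ (RealRoots ρ α ∩ NegRoots α Δ) with hΩ'
  have hdisj : Disjoint (PhiSet ρ α Δ x) X := by
    rw [Set.disjoint_left]
    rintro β ⟨_, hβn⟩ ⟨γ, hγ, rfl⟩
    rw [rho_cancel ρ x γ] at hβn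
    exact not_pos_and_neg h (phiInf_pos h hγ) hβn
  have heq : PhiInfX ρ α Δ x f = (PhiSet ρ α Δ x \ (-Ω)) ∪ (X \ Ω) := by
    ext β
    constructor
    · rintro ⟨⟨hre, hpos⟩, p₀, hp⟩
      have hγΔ : ρ x⁻¹ β ∈ Δ := h.winv _ _ hpos.1
      rcases pos_or_neg' h hγΔ with hγpos | hγneg
      · right
        have hp0 := hp p₀ le_rfl
        have hneg0 : ρ (zword f p₀)⁻¹ (ρ x⁻¹ β) ∈ NegRoots α Δ := by
          rw [← rho_mul_apply, ← mul_inv_rev]; exact hp0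
        have hmem : ρ x⁻¹ β ∈ PhiInf ρ α Δ f := Set.mem_iUnion.mpr ⟨p₀, hγpos, hneg0⟩
        refine ⟨⟨ρ x⁻¹ β, hmem, rho_cancel' ρ x β⟩, ?_⟩
        rintro ⟨_, _, hβneg⟩
        exact not_pos_and_neg h hpos hβneg
      · left
        refine ⟨⟨hpos, hγneg⟩, ?_⟩
        intro hmem
        rw [Set.mem_neg] at hmem
        rcases hmem with ⟨⟨γ, hγ, hγeq⟩, _, _⟩
        rcases Set.mem_iUnion.mp hγ with ⟨p, hpγ⟩
        have hq := phi_mono h hf (le_max_left p p₀) hpγ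
        have h1 : ρ (zword f (max p p₀))⁻¹ γ ∈ NegRoots α Δ := hq.2
        have h2 := hp (max p p₀) (le_max_right p p₀)
        have hγval : γ = -ρ x⁻¹ β := by
          have hcan := rho_cancel ρ x γ
          rw [hγeq, map_neg] at hcan
          rw [← hcan]
        have h2' : ρ (zword f (max p p₀))⁻¹ (ρ x⁻¹ β) ∈ NegRoots α Δ := by
          rw [← rho_mul_apply, ← mul_inv_rev]; exact h2
        rw [hγval, map_neg] at h1
        exact not_pos_and_neg h ((neg_mem_neg_iff h).mpr h1) h2'
    · rintro (⟨⟨hβpos, hγneg⟩, hnot⟩ | ⟨⟨γ, hγ, rfl⟩, hnot⟩)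
      · have hre : β ∈ RealRoots ρ α := by
          rcases exists_word h x with ⟨l, hl⟩
          exact real_of_phi h l β hβpos (by rw [hl]; exact hγneg)
        refine ⟨⟨hre, hβpos⟩, 0, fun p _ => ?_⟩
        have hv : ρ (zword f p)⁻¹ (ρ x⁻¹ β) ∈ Δ := h.winv _ _ (h.winv _ _ hβpos.1)
        rcases pos_or_neg' h hv with hc | hc
        · exfalso
          have hng : -ρ x⁻¹ β ∈ PosRoots α Δ := by
            rw [neg_mem_neg_iff h, neg_neg]; exact hγneg
          have hnn : ρ (zword f p)⁻¹ (-ρ x⁻¹ β) ∈ NegRoots α Δ := by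
            rw [map_neg, ← neg_mem_neg_iff h]; exact hc
          have hmem : -ρ x⁻¹ β ∈ PhiInf ρ α Δ f := Set.mem_iUnion.mpr ⟨p, hng, hnn⟩
          apply hnot
          rw [Set.mem_neg]
          refine ⟨⟨-ρ x⁻¹ β, hmem, ?_⟩, real_neg h hre, (neg_mem_neg_iff h).mp hβpos⟩
          rw [map_neg, rho_cancel' ρ x β]
        · rw [mul_inv_rev, rho_mul_apply]; exact hc
      · have hγpos := phiInf_pos h hγ
        have hre : ρ x γ ∈ RealRoots ρ α := real_smul h x (phiInf_real h hγ)
        have hΔ : ρ x γ ∈ Δ := h.winv _ _ hγpos.1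
        have hβpos : ρ x γ ∈ PosRoots α Δ := by
          rcases pos_or_neg' h hΔ with hc | hc
          · exact hc
          · exact absurd ⟨⟨γ, hγ, rfl⟩, hre, hc⟩ hnot
        rcases Set.mem_iUnion.mp hγ with ⟨p, hpγ⟩
        refine ⟨⟨hre, hβpos⟩, p, fun q hq => ?_⟩
        have hmem := (phi_mono h hf hq hpγ).2
        rw [mul_inv_rev, rho_mul_apply, rho_cancel ρ x γ]
        exact hmem
  refine ⟨⟨hdisj.mono Set.diff_subset Set.diff_subset, heq⟩, fun hsub => ?_⟩
  have hΩe : Ω = ∅ := by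
    ext v
    simp only [Set.mem_empty_iff_false, iff_false]
    rintro ⟨hvX, _, hvneg⟩
    exact not_pos_and_neg h (hsub hvX).2 hvneg
  refine ⟨hdisj, ?_⟩
  rw [heq, hΩe]
  simp

end
end

section
/- Let K₁, K₂ ⊆ J ⊆ ∘I and w₁, w₂ ∈ ∘W_J. Then w₁∘Δ^{K₁}_{J+} ⊆ w₂∘Δ^{K₂}_{J+} if and only if K₁ ⊇ K₂ and w₁ ∈ w₂∘W_{K₁}; the same equivalence holds with ∘Δ^{K₁}_{J−} and ∘Δ^{K₂}_{J−} in place of ∘Δ^{K₁}_{J+} and ∘Δ^{K₂}_{J+}. -/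
open scoped Pointwise

section

variable {ι V : Type*} [Fintype ι] [Nonempty ι] [AddCommGroup V] [Module ℝ V]

/-- The length of `w` with respect to a generating set `S` of a group. -/
noncomputable def lenG {G : Type*} [Group G] (S : Set G) (w : G) : ℕ :=
  sInf {n | ∃ l : List G, (∀ x ∈ l, x ∈ S) ∧ l.length = n ∧ l.prod = w}

/-- `v` is a nonnegative linear combination of the simple roots `α`. -/
def FPosComb (α : ι → V) (v : V) : Prop :=
  ∃ c : ι → ℝ, (∀ i, 0 ≤ c i) ∧ v = ∑ i, c i • α i

/-- The parabolic subgroup `∘W_J = ⟨s_j | j ∈ J⟩` of the Weyl group,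
realized inside the group of linear automorphisms of `V`. -/
def WoJ (r : ι → V ≃ₗ[ℝ] V) (J : Set ι) : Subgroup (V ≃ₗ[ℝ] V) :=
  Subgroup.closure (r '' J)

/-- `∘Δ_J = ∘W_J(∘Π_J)` (so `∘Δ_∅ = ∅`). -/
def DeloJ (α : ι → V) (r : ι → V ≃ₗ[ℝ] V) (J : Set ι) : Set V :=
  {v | ∃ g ∈ WoJ r J, ∃ j ∈ J, v = g (α j)}

/-- `∘Δ^K_{J+} = (∘Δ_J ∖ ∘Δ_K) ∩ ∘Δ₊`. -/
def DeloKJpos (α : ι → V) (r : ι → V ≃ₗ[ℝ] V) (J K : Set ι) : Set V :=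
  (DeloJ α r J \ DeloJ α r K) ∩ {v | FPosComb α v}

/-- `∘Δ^K_{J−} = (∘Δ_J ∖ ∘Δ_K) ∩ ∘Δ₋`. -/
def DeloKJneg (α : ι → V) (r : ι → V ≃ₗ[ℝ] V) (J K : Set ι) : Set V :=
  (DeloJ α r J \ DeloJ α r K) ∩ {v | FPosComb α (-v)}

/-- The set `∘W^K_J` of minimal-length representatives of the right cosets `∘W_J/∘W_K`. -/
def MinReps (r : ι → V ≃ₗ[ℝ] V) (J K : Set ι) : Set (V ≃ₗ[ℝ] V) :=
  {w | w ∈ WoJ r J ∧ ∀ v ∈ WoJ r K, lenG (Set.range r) w ≤ lenG (Set.range r) (w * v)}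

/-- `P` is a closed subset relative to the root system `Δo`. -/
def ClosedIn (Δo P : Set V) : Prop :=
  ∀ ε ∈ P, ∀ η ∈ P, ε + η ∈ Δo → ε + η ∈ P

/-- The hypotheses making `(∘Δ, ∘Π, (s_i)_i)` the root system of a finite-dimensional
simple Lie algebra over `ℝ`: `∘Π = {α_i}` is a linearly independent simple system, the `s_i`
are the corresponding simple reflections, `∘Δ = ∘W(∘Π)` is finite, crystallographic and
reduced, every root is a nonnegative or nonpositive combination of `∘Π` (but not both),
and the Dynkin diagram is connected (simplicity). -/
structure SimpleRootSystem (α : ι → V) (r : ι → V ≃ₗ[ℝ] V) : Prop where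
  indep : LinearIndependent ℝ α
  refl_self : ∀ i, r i (α i) = -α i
  refl_line : ∀ i, ∀ v : V, ∃ c : ℝ, r i v = v - c • α i
  invol : ∀ i, r i * r i = 1
  cryst : ∀ i, ∀ v ∈ DeloJ α r Set.univ, ∃ m : ℤ, r i v = v - m • α i
  base : ∀ v ∈ DeloJ α r Set.univ, Xor' (FPosComb α v) (FPosComb α (-v))
  finite : (DeloJ α r Set.univ).Finite
  reduced : ∀ v ∈ DeloJ α r Set.univ, (2 : ℝ) • v ∉ DeloJ α r Set.univ
  irred : ∀ A : Set ι, (∀ i ∈ A, ∀ j ∈ Aᶜ, r i (α j) = α j) → A = ∅ ∨ A = Set.univ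

end

/-!
Put `w = w₂⁻¹ w₁ ∈ W_J`. Both inclusions say that `w` maps `∘Δ^{K₁}_{J+}` into `∘Δ^{K₂}_{J+}`,
the `−` sets being the negatives of the `+` sets. For `k ∈ K`, `s_k` permutes the positive roots
outside `∘Δ_K`, which gives "if". Conversely, if `w` keeps `∘Δ^{K₁}_{J+}` positive, every simple
root `α_j` (`j ∈ J`) made negative by `w` lies in `∘Δ_{K₁}`, so `j ∈ K₁`, and `w s_j` has one
inversion less; by induction `w ∈ W_{K₁}`, once we know that only `1` has no inversions in
`∘Δ_{J+}`. That follows from `ℓ(w s_j) > ℓ(w) ⇒ w α_j > 0`, proved as for Coxeter groups by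
reduction to the rank-two subgroups `W_{j,k}` (Humphreys, *Reflection groups and Coxeter groups*,
5.4); in rank two it is checked by hand, using `a_{jk} a_{kj} ≠ 4`, which holds because `∘Δ` is
finite. Finally, for `k ∈ K₂ ∖ K₁` one of `±w⁻¹ α_k` lies in `∘Δ^{K₁}_{J+}` and is mapped to
`±α_k ∉ ∘Δ^{K₂}_{J+}`.
-/

section WordLength

variable {G : Type*} [Group G] {S T : Set G} {s w x y : G}

theorem lenG_le_length {l : List G} (hl : ∀ x ∈ l, x ∈ S) : lenG S l.prod ≤ l.length :=
  Nat.sInf_le ⟨l, hl, rfl, rfl⟩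

theorem exists_length_eq_lenG (hw : w ∈ Submonoid.closure S) :
    ∃ l : List G, (∀ x ∈ l, x ∈ S) ∧ l.length = lenG S w ∧ l.prod = w := by
  obtain ⟨l, hl, rfl⟩ := Submonoid.exists_list_of_mem_closure hw
  exact Nat.sInf_mem (s := {n | ∃ m : List G, (∀ x ∈ m, x ∈ S) ∧ m.length = n ∧ m.prod = l.prod})
    ⟨l.length, l, hl, rfl, rfl⟩

theorem lenG_one : lenG S 1 = 0 :=
  Nat.le_zero.mp (lenG_le_length (l := []) (by simp))

theorem eq_one_of_lenG_eq_zero (hw : w ∈ Submonoid.closure S) (h0 : lenG S w = 0) : w = 1 := by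
  obtain ⟨l, -, hl, rfl⟩ := exists_length_eq_lenG hw
  rw [List.length_eq_zero_iff.mp (hl.trans h0), List.prod_nil]

theorem lenG_mul_le (hTS : T ⊆ S) (hx : x ∈ Submonoid.closure S)
    (hy : y ∈ Submonoid.closure T) : lenG S (x * y) ≤ lenG S x + lenG T y := by
  obtain ⟨l, hl, hlx, rfl⟩ := exists_length_eq_lenG hx
  obtain ⟨m, hm, hmy, rfl⟩ := exists_length_eq_lenG hy
  rw [← hlx, ← hmy, ← List.length_append, ← List.prod_append]
  exact lenG_le_length fun z hz => (List.mem_append.mp hz).elim (hl z) (hTS <| hm z ·)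

theorem lenG_mul_le_succ (hw : w ∈ Submonoid.closure S) (hs : s ∈ S) :
    lenG S (w * s) ≤ lenG S w + 1 := by
  have hs1 : lenG S s ≤ 1 := by simpa using lenG_le_length (S := S) (l := [s]) (by simpa)
  have := lenG_mul_le subset_rfl hw (Submonoid.subset_closure hs)
  omega

theorem exists_lenG_mul_lt (hS : ∀ s ∈ S, s * s = 1) (hw : w ∈ Submonoid.closure S)
    (hpos : 0 < lenG S w) : ∃ s ∈ S, lenG S (w * s) < lenG S w := by
  obtain ⟨l, hl, hlw, rfl⟩ := exists_length_eq_lenG hw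
  obtain ⟨l', s, rfl⟩ : ∃ l' s, l = l' ++ [s] := by
    rcases List.eq_nil_or_concat l with rfl | ⟨l', s, rfl⟩
    · simp [lenG_one] at hpos
    · exact ⟨l', s, List.concat_eq_append⟩
  have hs : s ∈ S := hl s (by simp)
  refine ⟨s, hs, ?_⟩
  have hcancel : (l' ++ [s]).prod * s = l'.prod := by
    rw [List.prod_append, List.prod_singleton, mul_assoc, hS s hs, mul_one]
  rw [hcancel]
  have := lenG_le_length fun x hx => hl x (List.mem_append_left [s] hx)
  simp only [List.length_append, List.length_singleton] at hlw
  omega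

end WordLength

section Parabolic

variable {ι V : Type*} [AddCommGroup V] [Module ℝ V] {α : ι → V} {r : ι → V ≃ₗ[ℝ] V}
  {J K : Set ι} {j : ι} {g : V ≃ₗ[ℝ] V} {v : V}

theorem r_mem_WoJ (hj : j ∈ J) : r j ∈ WoJ r J :=
  Subgroup.subset_closure ⟨j, hj, rfl⟩

theorem WoJ_mono (hJK : J ⊆ K) : WoJ r J ≤ WoJ r K :=
  Subgroup.closure_mono (Set.image_mono hJK)

theorem alpha_mem_DeloJ (hj : j ∈ J) : α j ∈ DeloJ α r J :=
  ⟨1, one_mem _, j, hj, rfl⟩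

theorem DeloJ_mono (hJK : J ⊆ K) : DeloJ α r J ⊆ DeloJ α r K := by
  rintro v ⟨g, hg, j, hj, rfl⟩
  exact ⟨g, WoJ_mono hJK hg, j, hJK hj, rfl⟩

theorem apply_mem_DeloJ (hg : g ∈ WoJ r J) (hv : v ∈ DeloJ α r J) : g v ∈ DeloJ α r J := by
  obtain ⟨g', hg', j, hj, rfl⟩ := hv
  exact ⟨g * g', mul_mem hg hg', j, hj, rfl⟩

theorem apply_mem_DeloJ_iff (hg : g ∈ WoJ r J) : g v ∈ DeloJ α r J ↔ v ∈ DeloJ α r J :=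
  ⟨fun hgv => by simpa using apply_mem_DeloJ (inv_mem hg) hgv, apply_mem_DeloJ hg⟩

theorem mem_DeloJ_univ (hv : v ∈ DeloJ α r J) : v ∈ DeloJ α r Set.univ :=
  DeloJ_mono (Set.subset_univ J) hv

theorem list_prod_mem_WoJ {l : List (V ≃ₗ[ℝ] V)} (hl : ∀ x ∈ l, x ∈ r '' J) :
    l.prod ∈ WoJ r J :=
  Subgroup.list_prod_mem _ fun x hx => Subgroup.subset_closure (hl x hx)

theorem mem_WoJ_of_mem_closure {w : V ≃ₗ[ℝ] V} (hw : w ∈ Submonoid.closure (r '' J)) :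
    w ∈ WoJ r J :=
  Submonoid.closure_le.mpr Subgroup.subset_closure hw

end Parabolic

theorem image_subset_image_iff_mapsTo {R M : Type*} [Semiring R] [AddCommMonoid M] [Module R M]
    (e₁ e₂ : M ≃ₗ[R] M) (S T : Set M) : e₁ '' S ⊆ e₂ '' T ↔ Set.MapsTo ⇑(e₂⁻¹ * e₁) S T := by
  rw [LinearEquiv.image_eq_preimage_symm e₂, Set.image_subset_iff]
  rfl

theorem LinearEquiv.pow_apply_eq_add_nsmul {R M : Type*} [Semiring R] [AddCommMonoid M]
    [Module R M] (e : M ≃ₗ[R] M) {x ν : M} (hx : e x = x + ν) (hν : e ν = ν) (n : ℕ) :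
    (e ^ n) x = x + n • ν := by
  induction n with
  | zero => simp
  | succ n ih =>
    have hνn : (e ^ n) ν = ν := by
      rw [LinearEquiv.pow_apply]; exact Function.iterate_fixed hν n
    rw [pow_succ, LinearEquiv.mul_apply, hx, map_add, ih, hνn, add_assoc, succ_nsmul]

section RootSystem

variable {ι V : Type*} [Fintype ι] [AddCommGroup V] [Module ℝ V] {α : ι → V}
  {r : ι → V ≃ₗ[ℝ] V} {J K : Set ι} {i j k : ι} {g w : V ≃ₗ[ℝ] V} {u v : V}

namespace FPosComb

theorem zero : FPosComb α 0 :=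
  ⟨0, fun _ => le_rfl, by simp⟩

theorem alpha (j : ι) : FPosComb α (α j) := by
  classical
  exact ⟨fun i => if i = j then 1 else 0, fun i => by positivity, by simp [ite_smul]⟩

theorem add (hu : FPosComb α u) (hv : FPosComb α v) : FPosComb α (u + v) := by
  obtain ⟨c, hc, rfl⟩ := hu
  obtain ⟨d, hd, rfl⟩ := hv
  exact ⟨c + d, fun i => add_nonneg (hc i) (hd i), by simp [add_smul, Finset.sum_add_distrib]⟩

theorem smul {t : ℝ} (ht : 0 ≤ t) (hv : FPosComb α v) : FPosComb α (t • v) := by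
  obtain ⟨c, hc, rfl⟩ := hv
  exact ⟨fun i => t * c i, fun i => mul_nonneg ht (hc i), by simp [Finset.smul_sum, mul_smul]⟩

theorem sum_smul {κ : Type*} (s : Finset κ) {c : κ → ℝ} {f : κ → V} (hc : ∀ i ∈ s, 0 ≤ c i)
    (hf : ∀ i ∈ s, c i ≠ 0 → FPosComb α (f i)) : FPosComb α (∑ i ∈ s, c i • f i) := by
  refine Finset.sum_induction _ _ (fun _ _ => add) zero fun i hi => ?_
  obtain hci | hci := eq_or_ne (c i) 0
  · rw [hci, zero_smul]; exact zero
  · exact (hf i hi hci).smul (hc i hi)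

end FPosComb

theorem coeff_of_sum_eq_smul (hα : LinearIndependent ℝ α) {d : ι → ℝ} {c : ℝ}
    (e : ∑ i, d i • α i = c • α k) : d k = c ∧ ∀ i ≠ k, d i = 0 := by
  classical
  have := Fintype.linearIndependent_iffₛ.mp hα d (fun i => if i = k then c else 0)
    (by simp [e, ite_smul])
  exact ⟨by simpa using this k, fun i hi => by simpa [hi] using this i⟩

theorem FPosComb.eq_smul_of_add_eq_smul (hα : LinearIndependent ℝ α) (hu : FPosComb α u)
    (hv : FPosComb α v) {m : ℝ} (huv : u + v = m • α k) : ∃ c : ℝ, 0 ≤ c ∧ u = c • α k := by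
  obtain ⟨c, hc, rfl⟩ := hu
  obtain ⟨d, hd, rfl⟩ := hv
  have hcd := (coeff_of_sum_eq_smul (d := c + d) hα
    (by simpa [add_smul, Finset.sum_add_distrib] using huv)).2
  have hc0 : ∀ i ≠ k, c i = 0 := fun i hi => by
    linarith [hc i, hd i, hcd i hi, show (c + d) i = c i + d i from rfl]
  exact ⟨c k, hc k, Finset.sum_eq_single k (fun i _ hi => by rw [hc0 i hi, zero_smul])
    (by simp)⟩

theorem DeloKJpos_anti {K₁ K₂ : Set ι} (hK : K₂ ⊆ K₁) :
    DeloKJpos α r J K₁ ⊆ DeloKJpos α r J K₂ :=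
  Set.inter_subset_inter_left _ (Set.sdiff_subset_sdiff_right (DeloJ_mono hK))

namespace SimpleRootSystem

theorem r_inv (h : SimpleRootSystem α r) (i : ι) : (r i)⁻¹ = r i :=
  inv_eq_of_mul_eq_one_right (h.invol i)

theorem r_r_apply (h : SimpleRootSystem α r) (i : ι) (v : V) : r i (r i v) = v := by
  rw [← LinearEquiv.mul_apply, h.invol, LinearEquiv.coe_one, id]

theorem mul_r_mul_r (h : SimpleRootSystem α r) (w : V ≃ₗ[ℝ] V) (i : ι) : w * r i * r i = w := by
  rw [mul_assoc, h.invol, mul_one]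

theorem WoJ_toSubmonoid (h : SimpleRootSystem α r) (J : Set ι) :
    (WoJ r J).toSubmonoid = Submonoid.closure (r '' J) := by
  have hinv : (r '' J)⁻¹ = r '' J := by
    ext x
    refine ⟨fun ⟨j, hj, hx⟩ => ⟨j, hj, ?_⟩, fun ⟨j, hj, hx⟩ => ⟨j, hj, ?_⟩⟩
    · rw [← inv_inv x, ← hx, h.r_inv]
    · rw [← hx, h.r_inv]
  rw [WoJ, Subgroup.closure_toSubmonoid, hinv, Set.union_self]

theorem mem_closure_of_mem_WoJ (h : SimpleRootSystem α r) (hw : w ∈ WoJ r J) :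
    w ∈ Submonoid.closure (r '' J) := by
  rw [← h.WoJ_toSubmonoid]; exact hw

@[elab_as_elim]
theorem WoJ_induction (h : SimpleRootSystem α r) {p : (V ≃ₗ[ℝ] V) → Prop} (one : p 1)
    (mul_left : ∀ j ∈ J, ∀ w ∈ WoJ r J, p w → p (r j * w)) (hw : w ∈ WoJ r J) : p w := by
  induction hw using Subgroup.closure_induction_left with
  | one => exact one
  | mul_left x hx y hy ih =>
    obtain ⟨j, hj, rfl⟩ := hx
    exact mul_left j hj y hy ih
  | inv_mul_cancel x hx y hy ih =>
    obtain ⟨j, hj, rfl⟩ := hx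
    rw [h.r_inv]
    exact mul_left j hj y hy ih

theorem neg_mem_DeloJ (h : SimpleRootSystem α r) (hv : v ∈ DeloJ α r J) : -v ∈ DeloJ α r J := by
  obtain ⟨g, hg, j, hj, rfl⟩ := hv
  exact ⟨g * r j, mul_mem hg (r_mem_WoJ hj), j, hj, by rw [LinearEquiv.mul_apply, h.refl_self,
    map_neg]⟩

theorem apply_mem_span (h : SimpleRootSystem α r) (hw : w ∈ WoJ r J)
    (hv : v ∈ Submodule.span ℝ (α '' J)) : w v ∈ Submodule.span ℝ (α '' J) := by
  refine h.WoJ_induction hv ?_ hw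
  intro j hj w _ ih
  obtain ⟨c, hc⟩ := h.refl_line j (w v)
  rw [LinearEquiv.mul_apply, hc]
  exact Submodule.sub_mem _ ih (Submodule.smul_mem _ _ (Submodule.subset_span ⟨j, hj, rfl⟩))

theorem DeloJ_subset_span (h : SimpleRootSystem α r) :
    DeloJ α r J ⊆ Submodule.span ℝ (α '' J) := by
  rintro v ⟨g, hg, j, hj, rfl⟩
  exact h.apply_mem_span hg (Submodule.subset_span ⟨j, hj, rfl⟩)

end SimpleRootSystem

theorem exists_coeff_of_mem_span (hv : v ∈ Submodule.span ℝ (α '' J)) :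
    ∃ c : ι → ℝ, (∀ i ∉ J, c i = 0) ∧ v = ∑ i, c i • α i := by
  classical
  induction hv using Submodule.span_induction with
  | mem x hx =>
    obtain ⟨j, hj, rfl⟩ := hx
    refine ⟨fun i => if i = j then 1 else 0, fun i hi => ?_, by simp [ite_smul]⟩
    exact if_neg (ne_of_mem_of_not_mem hj hi).symm
  | zero => exact ⟨0, fun _ _ => rfl, by simp⟩
  | add x y _ _ hx hy =>
    obtain ⟨c, hc, rfl⟩ := hx
    obtain ⟨d, hd, rfl⟩ := hy
    exact ⟨c + d, fun i hi => by simp [hc i hi, hd i hi],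
      by simp [add_smul, Finset.sum_add_distrib]⟩
  | smul t x _ hx =>
    obtain ⟨c, hc, rfl⟩ := hx
    exact ⟨t • c, fun i hi => by simp [hc i hi], by simp [Finset.smul_sum, mul_smul]⟩

namespace SimpleRootSystem

theorem mem_of_alpha_mem_DeloJ (h : SimpleRootSystem α r) (hj : α j ∈ DeloJ α r K) : j ∈ K := by
  obtain ⟨c, hc, e⟩ := exists_coeff_of_mem_span (h.DeloJ_subset_span hj)
  have hcj := (coeff_of_sum_eq_smul h.indep (c := 1) (k := j) (by rw [← e, one_smul])).1
  by_contra hjK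
  rw [hc j hjK] at hcj
  exact zero_ne_one hcj

theorem exists_coeff_of_mem_DeloJ (h : SimpleRootSystem α r) (hv : v ∈ DeloJ α r J)
    (hp : FPosComb α v) :
    ∃ c : ι → ℝ, (∀ i, 0 ≤ c i) ∧ (∀ i ∉ J, c i = 0) ∧ v = ∑ i, c i • α i := by
  obtain ⟨c, hc, rfl⟩ := hp
  obtain ⟨d, hd, e⟩ := exists_coeff_of_mem_span (h.DeloJ_subset_span hv)
  obtain rfl : c = d := funext (Fintype.linearIndependent_iffₛ.mp h.indep c d e)
  exact ⟨c, hc, hd, rfl⟩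

theorem fPosComb_or_fPosComb_neg (h : SimpleRootSystem α r) (hv : v ∈ DeloJ α r J) :
    FPosComb α v ∨ FPosComb α (-v) := by
  rcases h.base v (mem_DeloJ_univ hv) with ⟨hp, -⟩ | ⟨hn, -⟩
  exacts [.inl hp, .inr hn]

theorem not_fPosComb_neg (h : SimpleRootSystem α r) (hv : v ∈ DeloJ α r J)
    (hp : FPosComb α v) : ¬FPosComb α (-v) := by
  rcases h.base v (mem_DeloJ_univ hv) with ⟨-, hn⟩ | ⟨-, hn⟩
  exacts [hn, absurd hp hn]

theorem ne_zero_of_mem_DeloJ (h : SimpleRootSystem α r) (hv : v ∈ DeloJ α r J) : v ≠ 0 := by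
  rintro rfl
  exact h.not_fPosComb_neg hv .zero (by rw [neg_zero]; exact .zero)

theorem r_apply_mem_span_int (h : SimpleRootSystem α r) (i : ι)
    (hv : v ∈ Submodule.span ℤ (Set.range α)) : r i v ∈ Submodule.span ℤ (Set.range α) := by
  induction hv using Submodule.span_induction with
  | mem x hx =>
    obtain ⟨j, rfl⟩ := hx
    obtain ⟨m, hm⟩ := h.cryst i (α j) (alpha_mem_DeloJ (Set.mem_univ j))
    rw [hm]
    exact Submodule.sub_mem _ (Submodule.subset_span ⟨j, rfl⟩)
      (Submodule.smul_mem _ m (Submodule.subset_span ⟨i, rfl⟩))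
  | zero => simp
  | add x y _ _ hx hy => rw [map_add]; exact Submodule.add_mem _ hx hy
  | smul n x _ hx => rw [map_zsmul]; exact Submodule.smul_mem _ n hx

theorem exists_int_coeff_of_mem_DeloJ (h : SimpleRootSystem α r) (hv : v ∈ DeloJ α r J) :
    ∃ n : ι → ℤ, v = ∑ i, (n i : ℝ) • α i := by
  obtain ⟨g, hg, j, -, rfl⟩ := hv
  have hmem : g (α j) ∈ Submodule.span ℤ (Set.range α) :=
    h.WoJ_induction (Submodule.subset_span ⟨j, rfl⟩)
      (fun i _ g _ ih => h.r_apply_mem_span_int i ih) hg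
  obtain ⟨n, hn⟩ := (Submodule.mem_span_range_iff_exists_fun ℤ).mp hmem
  exact ⟨n, by simp only [← hn, Int.cast_smul_eq_zsmul]⟩

theorem exists_int_eq_of_smul_alpha_mem (h : SimpleRootSystem α r) {c : ℝ}
    (hv : c • α k ∈ DeloJ α r J) : ∃ n : ℤ, c = n := by
  obtain ⟨n, hn⟩ := h.exists_int_coeff_of_mem_DeloJ hv
  exact ⟨n k, (coeff_of_sum_eq_smul h.indep hn.symm).1.symm⟩

theorem eq_one_of_smul_alpha_mem (h : SimpleRootSystem α r) {c : ℝ} (hc : 0 < c)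
    (hv : c • α k ∈ DeloJ α r J) : c = 1 := by
  obtain ⟨g, hg, j, -, hgj⟩ := mem_DeloJ_univ hv
  have hinv : c⁻¹ • α j ∈ DeloJ α r Set.univ := by
    have e : g⁻¹ (α k) = c⁻¹ • α j := by
      rw [eq_inv_smul_iff₀ hc.ne', ← map_smul, hgj, LinearEquiv.coe_inv,
        LinearEquiv.symm_apply_apply]
    rw [← e]
    exact apply_mem_DeloJ (inv_mem hg) (alpha_mem_DeloJ (Set.mem_univ k))
  obtain ⟨n, hn⟩ := h.exists_int_eq_of_smul_alpha_mem hv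
  obtain ⟨m, hm⟩ := h.exists_int_eq_of_smul_alpha_mem hinv
  have hnm : n * m = 1 := by
    exact_mod_cast (show (n : ℝ) * m = 1 by rw [← hn, ← hm, mul_inv_cancel₀ hc.ne'])
  rcases Int.eq_one_or_neg_one_of_mul_eq_one hnm with h1 | h1
  · simp [hn, h1]
  · rw [hn, h1] at hc; norm_num at hc

theorem fPosComb_r_apply (h : SimpleRootSystem α r) (hv : v ∈ DeloJ α r J)
    (hp : FPosComb α v) (hne : v ≠ α j) : FPosComb α (r j v) := by
  have hrv : r j v ∈ DeloJ α r Set.univ :=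
    apply_mem_DeloJ (r_mem_WoJ (Set.mem_univ j)) (mem_DeloJ_univ hv)
  refine (h.fPosComb_or_fPosComb_neg hrv).resolve_right fun hn => hne ?_
  obtain ⟨m, hm⟩ := h.cryst j v (mem_DeloJ_univ hv)
  obtain ⟨c, hc, rfl⟩ := hp.eq_smul_of_add_eq_smul h.indep hn (m := m)
    (by rw [hm, Int.cast_smul_eq_zsmul]; abel)
  have hc' : 0 < c := hc.lt_of_ne fun hc0 => h.ne_zero_of_mem_DeloJ hv (by rw [← hc0, zero_smul])
  rw [h.eq_one_of_smul_alpha_mem hc' hv, one_smul]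

end SimpleRootSystem

/-! ### Inversion sets -/

def invSet (α : ι → V) (r : ι → V ≃ₗ[ℝ] V) (J : Set ι) (w : V ≃ₗ[ℝ] V) : Set V :=
  {v | v ∈ DeloJ α r J ∧ FPosComb α v ∧ ¬FPosComb α (w v)}

theorem invSet_eq_empty_iff :
    invSet α r J w = ∅ ↔ ∀ v ∈ DeloJ α r J, FPosComb α v → FPosComb α (w v) := by
  simp only [Set.eq_empty_iff_forall_notMem, invSet, Set.mem_ofPred_eq, not_and, not_not]

theorem invSet_one : invSet α r J 1 = ∅ :=
  invSet_eq_empty_iff.mpr fun _ _ hp => hp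

namespace SimpleRootSystem

theorem invSet_finite (h : SimpleRootSystem α r) (J : Set ι) (w : V ≃ₗ[ℝ] V) :
    (invSet α r J w).Finite :=
  h.finite.subset fun _ hv => mem_DeloJ_univ hv.1

theorem image_r_invSet_diff_subset (h : SimpleRootSystem α r) (hj : j ∈ J) (w : V ≃ₗ[ℝ] V) :
    r j '' (invSet α r J w \ {α j}) ⊆ invSet α r J (w * r j) \ {α j} := by
  rintro _ ⟨u, ⟨⟨huJ, hup, hun⟩, hune⟩, rfl⟩
  refine ⟨⟨apply_mem_DeloJ (r_mem_WoJ hj) huJ, h.fPosComb_r_apply huJ hup hune, ?_⟩, ?_⟩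
  · rwa [LinearEquiv.mul_apply, h.r_r_apply]
  · intro hu
    have hneg : u = -α j := by rw [← h.r_r_apply j u, Set.mem_singleton_iff.mp hu, h.refl_self]
    exact h.not_fPosComb_neg (alpha_mem_DeloJ hj) (.alpha j) (hneg ▸ hup)

theorem invSet_mul_r_diff (h : SimpleRootSystem α r) (hj : j ∈ J) (w : V ≃ₗ[ℝ] V) :
    invSet α r J (w * r j) \ {α j} = r j '' (invSet α r J w \ {α j}) := by
  refine (Set.Subset.antisymm (fun v hv => ⟨r j v, ?_, h.r_r_apply j v⟩)
    (h.image_r_invSet_diff_subset hj w))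
  simpa only [h.mul_r_mul_r] using h.image_r_invSet_diff_subset hj (w * r j) ⟨v, hv, rfl⟩

theorem ncard_invSet_mul_r (h : SimpleRootSystem α r) (hj : j ∈ J) (hw : w ∈ WoJ r J)
    (hp : FPosComb α (w (α j))) :
    (invSet α r J (w * r j)).ncard = (invSet α r J w).ncard + 1 := by
  have hmem : α j ∈ invSet α r J (w * r j) := by
    refine ⟨alpha_mem_DeloJ hj, .alpha j, ?_⟩
    rw [LinearEquiv.mul_apply, h.refl_self, map_neg]
    exact h.not_fPosComb_neg (apply_mem_DeloJ hw (alpha_mem_DeloJ hj)) hp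
  have hnot : α j ∉ invSet α r J w := fun hc => hc.2.2 hp
  rw [← Set.ncard_sdiff_singleton_add_one hmem (h.invSet_finite J _), h.invSet_mul_r_diff hj w,
    Set.ncard_image_of_injective _ (r j).injective, Set.sdiff_singleton_eq_self hnot]

theorem ncard_invSet_mul_r_of_not (h : SimpleRootSystem α r) (hj : j ∈ J) (hw : w ∈ WoJ r J)
    (hn : ¬FPosComb α (w (α j))) :
    (invSet α r J w).ncard = (invSet α r J (w * r j)).ncard + 1 := by
  have hp : FPosComb α ((w * r j) (α j)) := by
    rw [LinearEquiv.mul_apply, h.refl_self, map_neg]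
    exact (h.fPosComb_or_fPosComb_neg (apply_mem_DeloJ hw (alpha_mem_DeloJ hj))).resolve_left hn
  simpa only [h.mul_r_mul_r] using h.ncard_invSet_mul_r hj (mul_mem hw (r_mem_WoJ hj)) hp

theorem ncard_invSet_prod_le (h : SimpleRootSystem α r) {l : List (V ≃ₗ[ℝ] V)}
    (hl : ∀ x ∈ l, x ∈ r '' J) :
    (invSet α r J l.prod).ncard ≤ l.length ∧
      (invSet α r J l.prod).ncard % 2 = l.length % 2 := by
  induction l using List.reverseRecOn with
  | nil => simp [invSet_one]
  | append_singleton l x ih =>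
    have hl' : ∀ y ∈ l, y ∈ r '' J := fun y hy => hl y (List.mem_append_left _ hy)
    obtain ⟨j, hj, rfl⟩ := hl x (by simp)
    obtain ⟨ih₁, ih₂⟩ := ih hl'
    have hw : l.prod ∈ WoJ r J := list_prod_mem_WoJ hl'
    rw [List.prod_append, List.prod_singleton, List.length_append, List.length_singleton]
    by_cases hp : FPosComb α (l.prod (α j))
    · have := h.ncard_invSet_mul_r hj hw hp; omega
    · have := h.ncard_invSet_mul_r_of_not hj hw hp; omega

theorem ncard_invSet_le_lenG (h : SimpleRootSystem α r) (hw : w ∈ WoJ r J) :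
    (invSet α r J w).ncard ≤ lenG (r '' J) w ∧
      (invSet α r J w).ncard % 2 = lenG (r '' J) w % 2 := by
  obtain ⟨l, hl, hlen, rfl⟩ := exists_length_eq_lenG (h.mem_closure_of_mem_WoJ hw)
  rw [← hlen]
  exact h.ncard_invSet_prod_le hl

theorem lenG_mul_r (h : SimpleRootSystem α r) (hj : j ∈ J) (hw : w ∈ WoJ r J) :
    lenG (r '' J) (w * r j) = lenG (r '' J) w + 1 ∨
      lenG (r '' J) w = lenG (r '' J) (w * r j) + 1 := by
  have hw' : w * r j ∈ WoJ r J := mul_mem hw (r_mem_WoJ hj)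
  have hle₁ := lenG_mul_le_succ (h.mem_closure_of_mem_WoJ hw) ⟨j, hj, rfl⟩
  have hle₂ := lenG_mul_le_succ (h.mem_closure_of_mem_WoJ hw') ⟨j, hj, rfl⟩
  rw [h.mul_r_mul_r] at hle₂
  -- the two lengths differ by at most one, and by parity they differ
  obtain ⟨-, hpar₁⟩ := h.ncard_invSet_le_lenG hw
  obtain ⟨-, hpar₂⟩ := h.ncard_invSet_le_lenG hw'
  by_cases hp : FPosComb α (w (α j))
  · have := h.ncard_invSet_mul_r hj hw hp; omega
  · have := h.ncard_invSet_mul_r_of_not hj hw hp; omega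

theorem fPosComb_apply_of_forall_alpha (h : SimpleRootSystem α r)
    (hsimple : ∀ j ∈ J, FPosComb α (w (α j))) (hv : v ∈ DeloJ α r J) (hp : FPosComb α v) :
    FPosComb α (w v) := by
  obtain ⟨c, hc, hcJ, rfl⟩ := h.exists_coeff_of_mem_DeloJ hv hp
  simp only [map_sum, map_smul]
  exact FPosComb.sum_smul _ (fun i _ => hc i) fun i _ hci =>
    hsimple i (by_contra fun hi => hci (hcJ i hi))

theorem exists_not_fPosComb_apply_alpha (h : SimpleRootSystem α r)
    (hv : v ∈ invSet α r J w) : ∃ j ∈ J, ¬FPosComb α (w (α j)) := by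
  by_contra! hsimple
  exact hv.2.2 (h.fPosComb_apply_of_forall_alpha hsimple hv.1 hv.2.1)

theorem invSet_inv_eq_empty (h : SimpleRootSystem α r) (hw : w ∈ WoJ r J)
    (hN : invSet α r J w = ∅) : invSet α r J w⁻¹ = ∅ := by
  -- `w` maps the finite set `∘Δ_{J+}` injectively into itself, hence onto itself
  set P : Set V := {v | v ∈ DeloJ α r J ∧ FPosComb α v}
  have hPfin : P.Finite := h.finite.subset fun v hv => mem_DeloJ_univ hv.1
  have hwP : w '' P = P := by
    refine Set.eq_of_subset_of_ncard_le ?_ (Set.ncard_image_of_injective _ w.injective).ge hPfin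
    rintro _ ⟨v, ⟨hvJ, hvp⟩, rfl⟩
    exact ⟨apply_mem_DeloJ hw hvJ, invSet_eq_empty_iff.mp hN v hvJ hvp⟩
  refine invSet_eq_empty_iff.mpr fun u huJ hup => ?_
  obtain ⟨v, hvP, rfl⟩ : u ∈ w '' P := by rw [hwP]; exact ⟨huJ, hup⟩
  simpa using hvP.2

theorem exists_apply_alpha_eq (h : SimpleRootSystem α r) (hw : w ∈ WoJ r J)
    (hN : invSet α r J w = ∅) (hj : j ∈ J) : ∃ k ∈ J, w (α j) = α k := by
  classical
  have hwj : w (α j) ∈ DeloJ α r J := apply_mem_DeloJ hw (alpha_mem_DeloJ hj)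
  obtain ⟨c, hc, hcJ, hwc⟩ := h.exists_coeff_of_mem_DeloJ hwj
    (invSet_eq_empty_iff.mp hN _ (alpha_mem_DeloJ hj) (.alpha j))
  have hmemJ : ∀ i, c i ≠ 0 → i ∈ J := fun i hi => by_contra fun hiJ => hi (hcJ i hiJ)
  have hinv : ∀ i, c i ≠ 0 → FPosComb α (w⁻¹ (α i)) := fun i hi =>
    invSet_eq_empty_iff.mp (h.invSet_inv_eq_empty hw hN) _ (alpha_mem_DeloJ (hmemJ i hi)) (.alpha i)
  obtain ⟨k, hk⟩ : ∃ k, c k ≠ 0 := by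
    by_contra! hc0
    exact h.ne_zero_of_mem_DeloJ hwj (by simp [hwc, hc0])
  -- applying `w⁻¹` writes `α j` as a nonnegative combination of positive roots
  have hsplit : c k • w⁻¹ (α k) + ∑ i ∈ Finset.univ.erase k, c i • w⁻¹ (α i) = (1 : ℝ) • α j := by
    rw [Finset.add_sum_erase _ (fun i => c i • w⁻¹ (α i)) (Finset.mem_univ k), one_smul]
    simpa [hwc] using w.symm_apply_apply (α j)
  obtain ⟨t, ht, hkt⟩ := ((hinv k hk).smul (hc k)).eq_smul_of_add_eq_smul h.indep
    (FPosComb.sum_smul _ (fun i _ => hc i) fun i _ => hinv i) hsplit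
  have hinvk : w⁻¹ (α k) = (t / c k) • α j := by
    rw [div_eq_inv_mul, mul_smul, ← hkt, inv_smul_smul₀ hk]
  have hroot : (t / c k) • α j ∈ DeloJ α r J :=
    hinvk ▸ apply_mem_DeloJ (inv_mem hw) (alpha_mem_DeloJ (hmemJ k hk))
  have htc : 0 < t / c k := (div_nonneg ht (hc k)).lt_of_ne fun h0 =>
    h.ne_zero_of_mem_DeloJ hroot (by rw [← h0, zero_smul])
  refine ⟨k, hmemJ k hk, ?_⟩
  rw [h.eq_one_of_smul_alpha_mem htc hroot, one_smul] at hinvk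
  rw [← hinvk, LinearEquiv.coe_inv, LinearEquiv.apply_symm_apply]

theorem lenG_eq_ncard_invSet (h : SimpleRootSystem α r)
    (hJ : ∀ d ∈ WoJ r J, invSet α r J d = ∅ → d = 1) (hw : w ∈ WoJ r J) :
    lenG (r '' J) w = (invSet α r J w).ncard := by
  refine le_antisymm ?_ (h.ncard_invSet_le_lenG hw).1
  induction hn : (invSet α r J w).ncard generalizing w with
  | zero =>
    rw [hJ w hw ((Set.ncard_eq_zero (h.invSet_finite J w)).mp hn), lenG_one]
  | succ n ih =>
    obtain ⟨v, hv⟩ := Set.nonempty_of_ncard_ne_zero (s := invSet α r J w) (by omega)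
    obtain ⟨j, hj, hwj⟩ := h.exists_not_fPosComb_apply_alpha hv
    have hw' : w * r j ∈ WoJ r J := mul_mem hw (r_mem_WoJ hj)
    have hlen := lenG_mul_le_succ (h.mem_closure_of_mem_WoJ hw') ⟨j, hj, rfl⟩
    rw [h.mul_r_mul_r] at hlen
    have := ih hw' (by have := h.ncard_invSet_mul_r_of_not hj hw hwj; omega)
    omega

/-! ### Rank two -/

theorem smul_alpha_injective (h : SimpleRootSystem α r) (i : ι) :
    Function.Injective fun c : ℝ => c • α i :=
  smul_left_injective ℝ (h.indep.ne_zero i)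

theorem coroot_coeff_unique (h : SimpleRootSystem α r) {c c' : ℝ} (hc : r i v = v - c • α i)
    (hc' : r i v = v - c' • α i) : c = c' :=
  h.smul_alpha_injective i (sub_right_injective (hc.symm.trans hc'))

/-- The coroot `α_i^∨`, defined by `s_i v = v - ⟨α_i^∨, v⟩ α_i`. -/
noncomputable def coroot (h : SimpleRootSystem α r) (i : ι) : Module.Dual ℝ V where
  toFun v := (h.refl_line i v).choose
  map_add' u v := h.coroot_coeff_unique (h.refl_line i (u + v)).choose_spec <| by
    have hu := (h.refl_line i u).choose_spec
    have hv := (h.refl_line i v).choose_spec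
    generalize (h.refl_line i u).choose = a at hu ⊢
    generalize (h.refl_line i v).choose = b at hv ⊢
    rw [map_add, hu, hv]
    module
  map_smul' t v := h.coroot_coeff_unique (h.refl_line i (t • v)).choose_spec <| by
    have hv := (h.refl_line i v).choose_spec
    generalize (h.refl_line i v).choose = a at hv ⊢
    rw [map_smul, hv, RingHom.id_apply, smul_eq_mul]
    module

theorem r_apply (h : SimpleRootSystem α r) (i : ι) (v : V) : r i v = v - h.coroot i v • α i :=
  (h.refl_line i v).choose_spec

theorem coroot_apply_self (h : SimpleRootSystem α r) (i : ι) : h.coroot i (α i) = 2 :=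
  h.smul_alpha_injective i <| by
    have := h.r_apply i (α i)
    rw [h.refl_self] at this
    linear_combination (norm := module) this

/-- In rank two, `a_{st} a_{ts} = 4` would make `s_t s_s` unipotent of infinite order on the
roots. -/
theorem coroot_mul_coroot_ne_four (h : SimpleRootSystem α r) {s t : ι} (hst : s ≠ t) :
    h.coroot s (α t) * h.coroot t (α s) ≠ 4 := by
  intro hab
  set a := h.coroot s (α t) with ha
  set b := h.coroot t (α s) with hb
  set M := r t * r s
  set ν : V := (-2 : ℝ) • α s + b • α t
  have hMs : M (α s) = α s + ν := by
    rw [LinearEquiv.mul_apply, h.refl_self, map_neg, h.r_apply t (α s)]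
    module
  have hMt : M (α t) = -a • α s + (a * b - 1) • α t := by
    rw [LinearEquiv.mul_apply, h.r_apply s (α t), map_sub, map_smul, h.refl_self, h.r_apply t,
      ← ha, ← hb]
    module
  have hMν : M ν = ν := by
    have e : M ν = (2 - a * b) • α s + (b * (a * b - 1) - 2 * b) • α t := by
      simp only [ν, map_add, map_smul, hMt]
      rw [LinearEquiv.mul_apply, h.refl_self, map_neg, h.r_apply t (α s)]
      module
    rw [e, hab]
    module
  have hν : ν ≠ 0 := fun hν => by
    have := ((LinearIndepOn.pair_iff α hst).mp (h.indep.linearIndepOn _) _ _ hν).1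
    norm_num at this
  have hroots : ∀ n : ℕ, α s + n • ν ∈ DeloJ α r Set.univ := fun n => by
    rw [← M.pow_apply_eq_add_nsmul hMs hMν n]
    exact apply_mem_DeloJ (pow_mem (mul_mem (r_mem_WoJ (Set.mem_univ t))
      (r_mem_WoJ (Set.mem_univ s))) n) (alpha_mem_DeloJ (Set.mem_univ s))
  refine h.finite.not_infinite (Set.infinite_of_injective_forall_mem (fun m n e => ?_) hroots)
  rw [add_right_inj, ← Nat.cast_smul_eq_nsmul ℝ, ← Nat.cast_smul_eq_nsmul ℝ] at e
  exact_mod_cast smul_left_injective ℝ hν e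

theorem apply_eq_self_of_coroot_eq_zero (h : SimpleRootSystem α r) (hw : w ∈ WoJ r J)
    (hv : ∀ i ∈ J, h.coroot i v = 0) : w v = v :=
  h.WoJ_induction rfl (fun j hj w _ ih => by
    rw [LinearEquiv.mul_apply, ih, h.r_apply, hv j hj, zero_smul, sub_zero]) hw

theorem eq_one_of_apply_alpha_eq_self (h : SimpleRootSystem α r) {s t : ι} (hst : s ≠ t)
    {d : V ≃ₗ[ℝ] V} (hd : d ∈ WoJ r {s, t}) (hs : d (α s) = α s) (ht : d (α t) = α t) :
    d = 1 := by
  have hD : 4 - h.coroot s (α t) * h.coroot t (α s) ≠ 0 :=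
    sub_ne_zero.mpr (h.coroot_mul_coroot_ne_four hst).symm
  refine LinearEquiv.ext fun v => ?_
  -- split off from `v` its component along `α_s, α_t` (solvable as the Cartan matrix is
  -- invertible); the rest is fixed by `W_{s,t}`
  set x := (2 * h.coroot s v - h.coroot s (α t) * h.coroot t v) /
    (4 - h.coroot s (α t) * h.coroot t (α s))
  set y := (2 * h.coroot t v - h.coroot t (α s) * h.coroot s v) /
    (4 - h.coroot s (α t) * h.coroot t (α s))
  have hfix : d (v - x • α s - y • α t) = v - x • α s - y • α t := by
    refine h.apply_eq_self_of_coroot_eq_zero hd ?_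
    rintro i (rfl | rfl)
    · simp only [map_sub, map_smul, smul_eq_mul, h.coroot_apply_self, x, y]
      field_simp
      ring
    · simp only [map_sub, map_smul, smul_eq_mul, h.coroot_apply_self, x, y]
      field_simp
      ring
  rwa [map_sub, map_sub, map_smul, map_smul, hs, ht, sub_left_inj, sub_left_inj] at hfix

noncomputable def pairDet (h : SimpleRootSystem α r) (s t : ι) (g : V ≃ₗ[ℝ] V) : ℝ :=
  h.coroot s (g (α s)) * h.coroot t (g (α t)) - h.coroot t (g (α s)) * h.coroot s (g (α t))

theorem pairDet_comm (h : SimpleRootSystem α r) (s t : ι) (g : V ≃ₗ[ℝ] V) :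
    h.pairDet s t g = h.pairDet t s g := by
  unfold pairDet
  ring

theorem pairDet_mul_r_left (h : SimpleRootSystem α r) (s t : ι) (g : V ≃ₗ[ℝ] V) :
    h.pairDet s t (g * r s) = -h.pairDet s t g := by
  have e₁ : (g * r s) (α s) = -g (α s) := by
    rw [LinearEquiv.mul_apply, h.refl_self, map_neg]
  have e₂ : (g * r s) (α t) = g (α t) - h.coroot s (α t) • g (α s) := by
    rw [LinearEquiv.mul_apply, h.r_apply s (α t), map_sub, map_smul]
  simp only [pairDet, e₁, e₂, map_neg, map_sub, map_smul, smul_eq_mul]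
  ring

theorem pairDet_mul_r (h : SimpleRootSystem α r) {s t k : ι} (hk : k ∈ ({s, t} : Set ι))
    (g : V ≃ₗ[ℝ] V) : h.pairDet s t (g * r k) = -h.pairDet s t g := by
  rcases hk with rfl | rfl
  · exact h.pairDet_mul_r_left _ _ g
  · rw [h.pairDet_comm, h.pairDet_mul_r_left, h.pairDet_comm]

theorem pairDet_prod (h : SimpleRootSystem α r) {s t : ι} {l : List (V ≃ₗ[ℝ] V)}
    (hl : ∀ x ∈ l, x ∈ r '' {s, t}) :
    h.pairDet s t l.prod = (-1) ^ l.length * (4 - h.coroot s (α t) * h.coroot t (α s)) := by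
  induction l using List.reverseRecOn with
  | nil =>
    simp only [pairDet, List.prod_nil, List.length_nil, pow_zero, LinearEquiv.coe_one, id,
      h.coroot_apply_self]
    ring
  | append_singleton l x ih =>
    obtain ⟨k, hk, rfl⟩ := hl x (by simp)
    rw [List.prod_append, List.prod_singleton, h.pairDet_mul_r hk,
      ih fun y hy => hl y (List.mem_append_left _ hy), List.length_append, List.length_singleton,
      pow_succ]
    ring

theorem eq_one_of_invSet_pair_eq_empty (h : SimpleRootSystem α r) {s t : ι} (hst : s ≠ t)
    {d : V ≃ₗ[ℝ] V} (hd : d ∈ WoJ r {s, t}) (hN : invSet α r {s, t} d = ∅) : d = 1 := by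
  obtain ⟨ks, hks, hdks⟩ := h.exists_apply_alpha_eq hd hN (Set.mem_insert s {t})
  obtain ⟨kt, hkt, hdkt⟩ := h.exists_apply_alpha_eq hd hN (Set.mem_insert_of_mem s rfl)
  have hne : ks ≠ kt := fun e => hst (h.indep.injective (d.injective (by rw [hdks, hdkt, e])))
  rcases hks with rfl | rfl <;> rcases hkt with rfl | rfl
  · exact absurd rfl hne
  · exact h.eq_one_of_apply_alpha_eq_self hst hd hdks hdkt
  · -- `d` swaps `α_s` and `α_t`, so `pairDet d = a_{st} a_{ts} - 4`; but `d` has no inversions,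
    -- hence even length and `pairDet d = 4 - a_{st} a_{ts}`
    obtain ⟨l, hl, rfl⟩ := Submonoid.exists_list_of_mem_closure (h.mem_closure_of_mem_WoJ hd)
    have heven : Even l.length := by
      have := (h.ncard_invSet_prod_le hl).2
      rw [hN, Set.ncard_empty] at this
      exact Nat.even_iff.mpr this.symm
    have hdet := h.pairDet_prod hl
    rw [heven.neg_one_pow, one_mul] at hdet
    simp only [pairDet, hdks, hdkt, h.coroot_apply_self] at hdet
    exact absurd (by linarith) (h.coroot_mul_coroot_ne_four hst)
  · exact absurd rfl hne

theorem fPosComb_apply_alpha_pair (h : SimpleRootSystem α r) {s t k : ι} (hst : s ≠ t)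
    {d : V ≃ₗ[ℝ] V} (hd : d ∈ WoJ r {s, t}) (hk : k ∈ ({s, t} : Set ι))
    (hlt : lenG (r '' {s, t}) d < lenG (r '' {s, t}) (d * r k)) : FPosComb α (d (α k)) := by
  have hlen : ∀ d ∈ WoJ r {s, t}, lenG (r '' {s, t}) d = (invSet α r {s, t} d).ncard :=
    fun _ => h.lenG_eq_ncard_invSet fun _ hd hN => h.eq_one_of_invSet_pair_eq_empty hst hd hN
  by_contra hn
  have := h.ncard_invSet_mul_r_of_not hk hd hn
  rw [hlen d hd, hlen _ (mul_mem hd (r_mem_WoJ hk))] at hlt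
  omega

theorem exists_pair_coeff (h : SimpleRootSystem α r) {s t : ι} (hst : s ≠ t)
    (hv : v ∈ DeloJ α r {s, t}) (hp : FPosComb α v) :
    ∃ x y : ℝ, 0 ≤ x ∧ 0 ≤ y ∧ v = x • α s + y • α t := by
  classical
  obtain ⟨c, hc, hcJ, rfl⟩ := h.exists_coeff_of_mem_DeloJ hv hp
  refine ⟨c s, c t, hc s, hc t, ?_⟩
  rw [← Finset.sum_subset (Finset.subset_univ {s, t}) fun i _ hi => by
    rw [hcJ i (by simpa using hi), zero_smul], Finset.sum_pair hst]

/-! ### Length and positivity -/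

theorem mul_self_eq_one_of_mem_image (h : SimpleRootSystem α r) :
    ∀ x ∈ r '' J, x * x = 1 := by
  rintro _ ⟨i, -, rfl⟩
  exact h.invol i

theorem exists_mul_prod_pair (h : SimpleRootSystem α r) (hj : j ∈ J) (hk : k ∈ J)
    (hw : w ∈ WoJ r J) :
    ∃ g ∈ WoJ r J, ∃ l : List (V ≃ₗ[ℝ] V), (∀ x ∈ l, x ∈ r '' {j, k}) ∧ w = g * l.prod ∧
      lenG (r '' J) w = lenG (r '' J) g + l.length ∧
      lenG (r '' J) g < lenG (r '' J) (g * r j) ∧ lenG (r '' J) g < lenG (r '' J) (g * r k) := by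
  induction hn : lenG (r '' J) w using Nat.strong_induction_on generalizing w with
  | _ n ih =>
  by_cases hmin : lenG (r '' J) w < lenG (r '' J) (w * r j) ∧
      lenG (r '' J) w < lenG (r '' J) (w * r k)
  · exact ⟨w, hw, [], by simp, by simp, by simp [hn], hmin⟩
  obtain ⟨u, hu, hlen⟩ : ∃ u ∈ ({j, k} : Set ι),
      lenG (r '' J) (w * r u) + 1 = lenG (r '' J) w := by
    rcases not_and_or.mp hmin with hc | hc
    · exact ⟨j, .inl rfl, ((h.lenG_mul_r hj hw).resolve_left (by omega)).symm⟩
    · exact ⟨k, .inr rfl, ((h.lenG_mul_r hk hw).resolve_left (by omega)).symm⟩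
  have huJ : u ∈ J := by rcases hu with rfl | rfl <;> assumption
  obtain ⟨g, hg, l, hl, hwg, hlen', hgj, hgk⟩ :=
    ih _ (by omega) (mul_mem hw (r_mem_WoJ huJ)) rfl
  refine ⟨g, hg, l ++ [r u], fun x hx => ?_, ?_, ?_, hgj, hgk⟩
  · rcases List.mem_append.mp hx with hx | hx
    exacts [hl x hx, ⟨u, hu, (List.mem_singleton.mp hx).symm⟩]
  · rw [List.prod_append, List.prod_singleton, ← mul_assoc, ← hwg, h.mul_r_mul_r]
  · rw [List.length_append, List.length_singleton]
    omega

theorem lenG_pair_lt_mul_r (h : SimpleRootSystem α r) (hj : j ∈ J) (hk : k ∈ J)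
    (hg : g ∈ WoJ r J) {l : List (V ≃ₗ[ℝ] V)} (hl : ∀ x ∈ l, x ∈ r '' {j, k})
    (hlen : lenG (r '' J) (g * l.prod) = lenG (r '' J) g + l.length)
    (hlt : lenG (r '' J) (g * l.prod) < lenG (r '' J) (g * l.prod * r j)) :
    lenG (r '' {j, k}) l.prod < lenG (r '' {j, k}) (l.prod * r j) := by
  have hjk : ({j, k} : Set ι) ⊆ J := Set.insert_subset hj (Set.singleton_subset_iff.mpr hk)
  have hd : l.prod ∈ Submonoid.closure (r '' {j, k}) :=
    Submonoid.list_prod_mem _ fun x hx => Submonoid.subset_closure (hl x hx)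
  have hdj : l.prod * r j ∈ Submonoid.closure (r '' {j, k}) :=
    mul_mem hd (Submonoid.subset_closure ⟨j, .inl rfl, rfl⟩)
  by_contra hge
  have hdesc := (h.lenG_mul_r (Set.mem_insert j {k}) (mem_WoJ_of_mem_closure hd)).resolve_left
    (by omega)
  have hsub := lenG_mul_le (Set.image_mono hjk) (h.mem_closure_of_mem_WoJ hg) hdj
  have hd_len := lenG_le_length hl
  rw [← mul_assoc] at hsub
  omega

theorem fPosComb_apply_alpha_of_lenG_lt (h : SimpleRootSystem α r) (hw : w ∈ WoJ r J)
    (hj : j ∈ J) (hlt : lenG (r '' J) w < lenG (r '' J) (w * r j)) : FPosComb α (w (α j)) := by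
  induction hn : lenG (r '' J) w using Nat.strong_induction_on generalizing w j with
  | _ n ih =>
  obtain h0 | hpos := Nat.eq_zero_or_pos n
  · rw [eq_one_of_lenG_eq_zero (h.mem_closure_of_mem_WoJ hw) (hn.trans h0)]
    exact .alpha j
  obtain ⟨_, ⟨k, hk, rfl⟩, hwk⟩ := exists_lenG_mul_lt h.mul_self_eq_one_of_mem_image
    (h.mem_closure_of_mem_WoJ hw) (hn ▸ hpos)
  have hjk : j ≠ k := by rintro rfl; omega
  -- write `w = g d` with `d ∈ W_{j,k}`, lengths adding up, and `g` shorter than `w` with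
  -- `g α_j, g α_k > 0`; then `d α_j ∈ ℝ₊α_j + ℝ₊α_k` by the rank-two case
  obtain ⟨g, hg, l, hl, rfl, hlen, hgj, hgk⟩ := h.exists_mul_prod_pair hj hk hw
  have hl0 : l ≠ [] := by
    rintro rfl
    simp only [List.prod_nil, mul_one] at hwk
    omega
  have hgn : lenG (r '' J) g < n := by
    have := List.length_pos_of_ne_nil hl0
    omega
  have hd : l.prod ∈ WoJ r {j, k} := list_prod_mem_WoJ hl
  obtain ⟨x, y, hx, hy, hxy⟩ := h.exists_pair_coeff hjk
    (apply_mem_DeloJ hd (alpha_mem_DeloJ (Set.mem_insert j {k})))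
    (h.fPosComb_apply_alpha_pair hjk hd (Set.mem_insert j {k})
      (h.lenG_pair_lt_mul_r hj hk hg hl hlen hlt))
  rw [LinearEquiv.mul_apply, hxy, map_add, map_smul, map_smul]
  exact ((ih _ hgn hg hj hgj rfl).smul hx).add ((ih _ hgn hg hk hgk rfl).smul hy)

theorem eq_one_of_invSet_eq_empty (h : SimpleRootSystem α r) (hw : w ∈ WoJ r J)
    (hN : invSet α r J w = ∅) : w = 1 := by
  refine eq_one_of_lenG_eq_zero (h.mem_closure_of_mem_WoJ hw)
    (Nat.eq_zero_of_not_pos fun hpos => ?_)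
  obtain ⟨_, ⟨k, hk, rfl⟩, hlt⟩ := exists_lenG_mul_lt h.mul_self_eq_one_of_mem_image
    (h.mem_closure_of_mem_WoJ hw) hpos
  have hneg := h.fPosComb_apply_alpha_of_lenG_lt (mul_mem hw (r_mem_WoJ hk)) hk
    (by rwa [h.mul_r_mul_r])
  rw [LinearEquiv.mul_apply, h.refl_self, map_neg] at hneg
  exact h.not_fPosComb_neg (apply_mem_DeloJ hw (alpha_mem_DeloJ hk))
    (invSet_eq_empty_iff.mp hN _ (alpha_mem_DeloJ hk) (.alpha k)) hneg

theorem neg_mem_DeloJ_iff (h : SimpleRootSystem α r) : -v ∈ DeloJ α r J ↔ v ∈ DeloJ α r J :=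
  ⟨fun hv => by simpa using h.neg_mem_DeloJ hv, h.neg_mem_DeloJ⟩

theorem fPosComb_apply_of_notMem_DeloJ (h : SimpleRootSystem α r) (hw : w ∈ WoJ r K)
    (hv : v ∈ DeloJ α r J) (hp : FPosComb α v) (hvK : v ∉ DeloJ α r K) : FPosComb α (w v) := by
  refine h.WoJ_induction hp (fun j hj w hw ih => ?_) hw
  have hwvK : w v ∉ DeloJ α r K := (apply_mem_DeloJ_iff hw).not.mpr hvK
  exact h.fPosComb_r_apply (apply_mem_DeloJ (WoJ_mono (Set.subset_univ K) hw) (mem_DeloJ_univ hv))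
    ih fun e => hwvK (e ▸ alpha_mem_DeloJ hj)

theorem mapsTo_DeloKJpos (h : SimpleRootSystem α r) (hw : w ∈ WoJ r J) (hwK : w ∈ WoJ r K) :
    Set.MapsTo w (DeloKJpos α r J K) (DeloKJpos α r J K) := fun _ ⟨⟨hvJ, hvK⟩, hp⟩ =>
  ⟨⟨apply_mem_DeloJ hw hvJ, (apply_mem_DeloJ_iff hwK).not.mpr hvK⟩,
    h.fPosComb_apply_of_notMem_DeloJ hwK hvJ hp hvK⟩

theorem mem_WoJ_of_forall_fPosComb (h : SimpleRootSystem α r) (hw : w ∈ WoJ r J)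
    (hpos : ∀ v ∈ DeloKJpos α r J K, FPosComb α (w v)) : w ∈ WoJ r K := by
  induction hn : (invSet α r J w).ncard generalizing w with
  | zero =>
    rw [h.eq_one_of_invSet_eq_empty hw ((Set.ncard_eq_zero (h.invSet_finite J w)).mp hn)]
    exact one_mem _
  | succ n ih =>
    obtain ⟨v, hv⟩ := Set.nonempty_of_ncard_ne_zero (s := invSet α r J w) (by omega)
    obtain ⟨j, hj, hwj⟩ := h.exists_not_fPosComb_apply_alpha hv
    have hjK : j ∈ K := h.mem_of_alpha_mem_DeloJ <| by_contra fun hK =>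
      hwj (hpos _ ⟨⟨alpha_mem_DeloJ hj, hK⟩, .alpha j⟩)
    have hw' : w * r j ∈ WoJ r K :=
      ih (mul_mem hw (r_mem_WoJ hj))
        (fun v hv => hpos _ (h.mapsTo_DeloKJpos (r_mem_WoJ hj) (r_mem_WoJ hjK) hv))
        (by have := h.ncard_invSet_mul_r_of_not hj hw hwj; omega)
    simpa [h.mul_r_mul_r] using mul_mem hw' (r_mem_WoJ hjK)

theorem subset_of_mapsTo_DeloKJpos (h : SimpleRootSystem α r) {K₁ K₂ : Set ι} (hK₂ : K₂ ⊆ J)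
    (hw : w ∈ WoJ r J) (hwK : w ∈ WoJ r K₁)
    (hmaps : Set.MapsTo w (DeloKJpos α r J K₁) (DeloKJpos α r J K₂)) : K₂ ⊆ K₁ := by
  intro k hk
  by_contra hk₁
  -- `±w⁻¹ α_k` lies in `∘Δ^{K₁}_{J+}`, but `±α_k ∉ ∘Δ^{K₂}_{J+}`
  have hwv : w (w⁻¹ (α k)) = α k := w.apply_symm_apply _
  have hvJ : w⁻¹ (α k) ∈ DeloJ α r J := apply_mem_DeloJ (inv_mem hw) (alpha_mem_DeloJ (hK₂ hk))
  have hvK : w⁻¹ (α k) ∉ DeloJ α r K₁ := fun hc =>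
    hk₁ (h.mem_of_alpha_mem_DeloJ (hwv ▸ apply_mem_DeloJ hwK hc))
  rcases h.fPosComb_or_fPosComb_neg hvJ with hp | hn
  · exact (hmaps ⟨⟨hvJ, hvK⟩, hp⟩).1.2 (by rw [hwv]; exact alpha_mem_DeloJ hk)
  · have hpos := (hmaps ⟨⟨h.neg_mem_DeloJ hvJ, h.neg_mem_DeloJ_iff.not.mpr hvK⟩, hn⟩).2
    rw [map_neg, hwv] at hpos
    exact h.not_fPosComb_neg (alpha_mem_DeloJ hk) (.alpha k) hpos

theorem mapsTo_DeloKJpos_iff (h : SimpleRootSystem α r) {K₁ K₂ : Set ι} (hK₂ : K₂ ⊆ J)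
    (hw : w ∈ WoJ r J) :
    Set.MapsTo w (DeloKJpos α r J K₁) (DeloKJpos α r J K₂) ↔ K₂ ⊆ K₁ ∧ w ∈ WoJ r K₁ := by
  refine ⟨fun hmaps => ?_, fun ⟨hK, hwK⟩ =>
    (h.mapsTo_DeloKJpos hw hwK).mono_right (DeloKJpos_anti hK)⟩
  have hwK := h.mem_WoJ_of_forall_fPosComb hw fun v hv => (hmaps hv).2
  exact ⟨h.subset_of_mapsTo_DeloKJpos hK₂ hw hwK hmaps, hwK⟩

theorem DeloKJneg_eq_neg (h : SimpleRootSystem α r) (J K : Set ι) :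
    DeloKJneg α r J K = -DeloKJpos α r J K := by
  ext v
  simp only [DeloKJneg, DeloKJpos, Set.mem_neg, Set.mem_inter_iff, Set.mem_sdiff,
    Set.mem_ofPred_eq, h.neg_mem_DeloJ_iff]

end SimpleRootSystem

end RootSystem

section

variable {ι V : Type*} [Fintype ι] [Nonempty ι] [AddCommGroup V] [Module ℝ V]

theorem statement7_general (α : ι → V) (r : ι → V ≃ₗ[ℝ] V) (h : SimpleRootSystem α r)
    (J K₁ K₂ : Set ι) (hK₂ : K₂ ⊆ J)
    (w₁ w₂ : V ≃ₗ[ℝ] V) (hw₁ : w₁ ∈ WoJ r J) (hw₂ : w₂ ∈ WoJ r J) :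
    ((⇑w₁ '' DeloKJpos α r J K₁ ⊆ ⇑w₂ '' DeloKJpos α r J K₂) ↔
        (K₂ ⊆ K₁ ∧ w₂⁻¹ * w₁ ∈ WoJ r K₁)) ∧
      ((⇑w₁ '' DeloKJneg α r J K₁ ⊆ ⇑w₂ '' DeloKJneg α r J K₂) ↔
        (K₂ ⊆ K₁ ∧ w₂⁻¹ * w₁ ∈ WoJ r K₁)) := by
  have hpos := h.mapsTo_DeloKJpos_iff (K₁ := K₁) hK₂ (mul_mem (inv_mem hw₂) hw₁)
  refine ⟨(image_subset_image_iff_mapsTo w₁ w₂ _ _).trans hpos, ?_⟩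
  rw [h.DeloKJneg_eq_neg, h.DeloKJneg_eq_neg,
    Set.image_neg_of_apply_neg_eq_neg fun x _ => map_neg w₁ x,
    Set.image_neg_of_apply_neg_eq_neg fun x _ => map_neg w₂ x, Set.neg_subset_neg]
  exact (image_subset_image_iff_mapsTo w₁ w₂ _ _).trans hpos

/-- Lemma 4.1(4): for `K₁, K₂ ⊆ J` and `w₁, w₂ ∈ ∘W_J`,
`w₁∘Δ^{K₁}_{J+} ⊆ w₂∘Δ^{K₂}_{J+}` iff `K₁ ⊇ K₂` and `w₁ ∈ w₂∘W_{K₁}`,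
and likewise with `−` in place of `+`. -/
theorem statement7 (α : ι → V) (r : ι → V ≃ₗ[ℝ] V) (h : SimpleRootSystem α r)
    (J K₁ K₂ : Set ι) (hK₁ : K₁ ⊆ J) (hK₂ : K₂ ⊆ J)
    (w₁ w₂ : V ≃ₗ[ℝ] V) (hw₁ : w₁ ∈ WoJ r J) (hw₂ : w₂ ∈ WoJ r J) :
    ((⇑w₁ '' DeloKJpos α r J K₁ ⊆ ⇑w₂ '' DeloKJpos α r J K₂) ↔
        (K₂ ⊆ K₁ ∧ w₂⁻¹ * w₁ ∈ WoJ r K₁)) ∧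
      ((⇑w₁ '' DeloKJneg α r J K₁ ⊆ ⇑w₂ '' DeloKJneg α r J K₂) ↔
        (K₂ ⊆ K₁ ∧ w₂⁻¹ * w₁ ∈ WoJ r K₁)) :=
  statement7_general α r h J K₁ K₂ hK₂ w₁ w₂ hw₁ hw₂

end
end
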